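/- arXiv:2302.10604 — 8 statements merged into one kernel-verified Lean document; each statement's English description precedes it below -/
import Mathlib

section
/- Let A, B, C, D ∈ ℝ^{n×n} with C = Cᵀ symmetric positive definite, B = Bᵀ symmetric positive definite, and D − Aᵀ invertible. Then det(M + zMᵀ) ≠ 0 for every z ∈ ℂ with |z| = 1; in particular the ⊤-palindromic pencil φ(z) = M + zMᵀ is regular and has no eigenvalues on the unit circle. -/
/-!
Let `M = [[C, D], [A, -B]]` and suppose `(M + z Mᴴ) (x, y) = 0` with `|z| = 1`. Subtracting `z` times
the conjugate of `y* (second block row)` from `x* (first block row)` makes the `A`- and `D`-terms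
cancel, because `z z̄ = 1`, and leaves `(1 + z) (x* C x + y* B y) = 0`. For `z ≠ -1` definiteness
of `C` and `B` gives `x = y = 0`; for `z = -1` the pencil is block anti-diagonal with the invertible
blocks `D - Aᴴ` and `-(D - Aᴴ)ᴴ`. A real matrix has `Mᵀ = Mᴴ`, so this covers the ⊤-palindromic
pencil.
-/

open scoped Matrix ComplexOrder

namespace Matrix

section Blocks

variable {m n R : Type*}

theorem fromBlocks_add_smul_conjTranspose [CommRing R] [StarRing R]
    {C : Matrix m m R} {B : Matrix n n R} (hC : C.IsHermitian) (hB : B.IsHermitian)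
    (D : Matrix m n R) (A : Matrix n m R) (z : R) :
    fromBlocks C D A (-B) + z • (fromBlocks C D A (-B))ᴴ =
      fromBlocks ((1 + z) • C) (D + z • Aᴴ) (A + z • Dᴴ) (-((1 + z) • B)) := by
  rw [fromBlocks_conjTranspose, conjTranspose_neg, hC.eq, hB.eq, fromBlocks_smul, fromBlocks_add]
  congr 1 <;> module

variable [Fintype m] [Fintype n]

theorem star_dotProduct_mulVec [CommRing R] [StarRing R] (M : Matrix m n R) (x : n → R)
    (y : m → R) : star (star y ⬝ᵥ M *ᵥ x) = star x ⬝ᵥ Mᴴ *ᵥ y := by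
  rw [← star_dotProduct_star, star_star, star_mulVec, ← dotProduct_mulVec]

theorem palindromic_quadratic_identity [CommRing R] [StarRing R]
    {C : Matrix m m R} {B : Matrix n n R} (hB : B.IsHermitian)
    (D : Matrix m n R) (A : Matrix n m R) {z : R} (hz : z * star z = 1) (x : m → R) (y : n → R) :
    star x ⬝ᵥ (((1 + z) • C) *ᵥ x + (D + z • Aᴴ) *ᵥ y)
      - z * star (star y ⬝ᵥ ((A + z • Dᴴ) *ᵥ x + -((1 + z) • B) *ᵥ y)) =
      (1 + z) * (star x ⬝ᵥ C *ᵥ x + star y ⬝ᵥ B *ᵥ y) := by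
  have hyBy : star (star y ⬝ᵥ B *ᵥ y) = star y ⬝ᵥ B *ᵥ y := by
    rw [star_dotProduct_mulVec, hB.eq]
  simp only [dotProduct_add, star_add, add_mulVec, smul_mulVec, neg_mulVec, dotProduct_smul,
    dotProduct_neg, star_neg, smul_eq_mul, star_mul', star_dotProduct_mulVec, hyBy,
    conjTranspose_conjTranspose, star_one]
  linear_combination (star y ⬝ᵥ B *ᵥ y - star x ⬝ᵥ D *ᵥ y) * hz

theorem PosDef.eq_zero_of_dotProduct_mulVec_add_eq_zero [CommRing R] [PartialOrder R]
    [StarRing R] [IsOrderedAddMonoid R] {C : Matrix m m R} {B : Matrix n n R}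
    (hC : C.PosDef) (hB : B.PosDef) {x : m → R} {y : n → R}
    (h : star x ⬝ᵥ C *ᵥ x + star y ⬝ᵥ B *ᵥ y = 0) : x = 0 ∧ y = 0 := by
  obtain ⟨hx, hy⟩ := (add_eq_zero_iff_of_nonneg (hC.posSemidef.dotProduct_mulVec_nonneg x)
    (hB.posSemidef.dotProduct_mulVec_nonneg y)).mp h
  constructor
  · by_contra hx₀
    exact (hC.dotProduct_mulVec_pos hx₀).ne' hx
  · by_contra hy₀
    exact (hB.dotProduct_mulVec_pos hy₀).ne' hy

end Blocks

theorem conjTranspose_map_ofReal {m n : Type*} (N : Matrix m n ℝ) :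
    (N.map Complex.ofReal)ᴴ = (N.map Complex.ofReal)ᵀ := by
  rw [← conjTranspose_map _ fun a => (Complex.conj_ofReal a).symm,
    conjTranspose_eq_transpose_of_trivial, transpose_map]

theorem PosDef.map_ofReal {n : Type*} [Fintype n] {C : Matrix n n ℝ} (hC : C.PosDef) :
    (C.map Complex.ofReal).PosDef := by
  classical
  have hstar (N : Matrix n n ℝ) :
      star (N.map Complex.ofRealHom) = (star N).map Complex.ofRealHom :=
    (conjTranspose_map (A := N) Complex.ofRealHom fun _ => (Complex.conj_ofReal _).symm).symm
  set U : Matrix n n ℂ := (hC.1.eigenvectorUnitary : Matrix n n ℝ).map Complex.ofRealHom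
    with hU_def
  have hC_eq : C.map Complex.ofRealHom =
      U * diagonal (fun i => (hC.1.eigenvalues i : ℂ)) * star U := by
    conv_lhs => rw [hC.1.spectral_theorem, Unitary.conjStarAlgAut_apply]
    rw [Matrix.map_mul, Matrix.map_mul, hU_def, hstar, diagonal_map (map_zero _)]
    rfl
  have hU : IsUnit U := by
    refine IsUnit.of_mul_eq_one (star U) ?_
    rw [hU_def, hstar, ← Matrix.map_mul, Unitary.mul_star_self_of_mem hC.1.eigenvectorUnitary.2,
      Matrix.map_one _ (map_zero _) (map_one _)]
  change (C.map Complex.ofRealHom).PosDef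
  rw [hC_eq, IsUnit.posDef_star_right_conjugate_iff hU, posDef_diagonal_iff]
  exact fun i => mod_cast hC.eigenvalues_pos i

section Pencil

variable {n : Type*} [Fintype n] [DecidableEq n] {A B C D : Matrix n n ℂ}

theorem eq_zero_of_fromBlocks_add_smul_conjTranspose_mulVec_eq_zero
    (hC : C.PosDef) (hB : B.PosDef) (hDA : IsUnit (D - Aᴴ)) {z : ℂ} (hz : ‖z‖ = 1)
    {v : n ⊕ n → ℂ} (hv : (fromBlocks C D A (-B) + z • (fromBlocks C D A (-B))ᴴ) *ᵥ v = 0) :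
    v = 0 := by
  obtain ⟨x, y, rfl⟩ : ∃ x y, v = Sum.elim x y := ⟨_, _, (Sum.elim_comp_inl_inr v).symm⟩
  rw [fromBlocks_add_smul_conjTranspose hC.1 hB.1, fromBlocks_mulVec, Sum.elim_comp_inl,
    Sum.elim_comp_inr, ← Sum.elim_zero_zero, Sum.elim_eq_iff] at hv
  obtain ⟨h₁, h₂⟩ := hv
  rw [← Sum.elim_zero_zero, Sum.elim_eq_iff]
  rcases eq_or_ne z (-1) with rfl | hz₁
  · simp only [add_neg_cancel, zero_smul, neg_zero, zero_mulVec, zero_add, add_zero,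
      neg_one_smul, ← sub_eq_add_neg] at h₁ h₂
    have hAD : A - Dᴴ = -(D - Aᴴ)ᴴ := by
      rw [conjTranspose_sub, conjTranspose_conjTranspose, neg_sub]
    rw [hAD, ← mulVec_zero (-(D - Aᴴ)ᴴ)] at h₂
    rw [← mulVec_zero (D - Aᴴ)] at h₁
    exact ⟨mulVec_injective_of_isUnit ((isUnit_conjTranspose _).mpr hDA).neg h₂,
      mulVec_injective_of_isUnit hDA h₁⟩
  · have hzz : z * star z = 1 := by
      rw [Complex.star_def, Complex.mul_conj, Complex.normSq_eq_norm_sq, hz, one_pow,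
        Complex.ofReal_one]
    have key := palindromic_quadratic_identity (C := C) hB.1 D A hzz x y
    rw [h₁, h₂, dotProduct_zero, dotProduct_zero, star_zero, mul_zero, sub_zero, eq_comm,
      mul_eq_zero] at key
    refine hC.eq_zero_of_dotProduct_mulVec_add_eq_zero hB (key.resolve_left fun h => hz₁ ?_)
    linear_combination h

theorem det_fromBlocks_add_smul_conjTranspose_ne_zero
    (hC : C.PosDef) (hB : B.PosDef) (hDA : IsUnit (D - Aᴴ)) {z : ℂ} (hz : ‖z‖ = 1) :
    (fromBlocks C D A (-B) + z • (fromBlocks C D A (-B))ᴴ).det ≠ 0 := fun h => by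
  obtain ⟨v, hv₀, hv⟩ := exists_mulVec_eq_zero_iff.mpr h
  exact hv₀ (eq_zero_of_fromBlocks_add_smul_conjTranspose_mulVec_eq_zero hC hB hDA hz hv)

end Pencil

end Matrix

open Matrix in
/-- If `C = Cᵀ` and `B = Bᵀ` are real symmetric positive definite and
`D - Aᵀ` is invertible, then `det (M + z Mᵀ) ≠ 0` for every `z` on the unit circle,
where `M = [[C, D], [A, -B]]` is viewed as a complex matrix; in particular the
⊤-palindromic pencil `φ(z) = M + z Mᵀ` is regular and has no eigenvalues on the
unit circle. -/
theorem palindromic_pencil_no_critical_eigenvalues_posDef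
    (n : ℕ) (A B C D : Matrix (Fin n) (Fin n) ℝ)
    (hC : C.PosDef) (hB : B.PosDef)
    (hDA : IsUnit (D - Aᵀ)) :
    ∀ M : Matrix (Fin n ⊕ Fin n) (Fin n ⊕ Fin n) ℂ,
      M = (Matrix.fromBlocks C D A (-B)).map (Complex.ofReal ·) →
      (∃ z : ℂ, (M + z • Mᵀ).det ≠ 0) ∧
      ∀ z : ℂ, ‖z‖ = 1 → (M + z • Mᵀ).det ≠ 0 := by
  have hDA' : IsUnit (D.map Complex.ofReal - (A.map Complex.ofReal)ᴴ) := by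
    rw [conjTranspose_map_ofReal, ← transpose_map, ← Matrix.map_sub _ Complex.ofReal_sub]
    exact hDA.map Complex.ofRealHom.mapMatrix
  intro M hM
  have hne (z : ℂ) (hz : ‖z‖ = 1) : (M + z • Mᵀ).det ≠ 0 := by
    rw [hM, ← conjTranspose_map_ofReal, fromBlocks_map, Matrix.map_neg _ Complex.ofReal_neg]
    exact det_fromBlocks_add_smul_conjTranspose_ne_zero hC.map_ofReal hB.map_ofReal hDA' hz
  exact ⟨⟨1, hne 1 norm_one⟩, hne⟩
end

section
/- Let M ∈ ℂ^{2n×2n} be such that the ⊤-palindromic pencil φ(z) = M + zMᵀ is regular. Let U, V ∈ ℂ^{2n×ℓ} with U of rank ℓ, and let A', B' ∈ ℂ^{ℓ×ℓ} be such that M·U = V·A' and Mᵀ·U = V·B', where the pencil A' + zB' is regular with reciprocal-free spectrum. Then the column span of U is isotropic for φ(z), i.e., Uᵀ M U = 0 (equivalently, Uᵀ(M + zMᵀ)U = 0 for all z ∈ ℂ). -/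
open scoped Matrix

/-- A pencil `A + z B` of square complex matrices is regular
if `det (A + z B)` is not identically zero. -/
def PencilRegular {k : ℕ} (A B : Matrix (Fin k) (Fin k) ℂ) : Prop :=
  ∃ z : ℂ, (A + z • B).det ≠ 0

/-- The spectrum of the pencil `A + z B` is reciprocal-free: no pair of eigenvalues
`(z, w)` with `z w = 1`, and `0` and `∞` are not both eigenvalues. -/
def PencilReciprocalFree {k : ℕ} (A B : Matrix (Fin k) (Fin k) ℂ) : Prop :=
  (¬ ∃ z w : ℂ, z * w = 1 ∧ (A + z • B).det = 0 ∧ (A + w • B).det = 0) ∧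
    ¬ (A.det = 0 ∧ B.det = 0)

/-!
With `Z = Vᵀ U` we have `Uᵀ M U = Zᵀ A'` and `Uᵀ Mᵀ U = Zᵀ B'`, so transposing the first identity
gives `A'ᵀ Z = Zᵀ B'`; it suffices to show that this forces `Z = 0`. Pick `z` with `z² ≠ 1` such
that `G = A' + z B'` and `H = B' + z A'` are invertible. Then `Gᵀ Z = Zᵀ H` and its transpose
`Hᵀ Z = Zᵀ G` combine into the Sylvester equation `(Gᵀ)⁻¹ Hᵀ Z = Z (H⁻¹ G)`. A common eigenvalue
`μ` of the two coefficients would make both `a A' + b B'` and `b A' + a B'` singular, where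
`(a, b) = (μ - z, μ z - 1) ≠ 0`; this produces either a reciprocal pair of eigenvalues or singular
`A'` and `B'`. So the spectra are disjoint and `Z = 0`.
-/

open Polynomial Matrix

theorem Polynomial.aeval_mul_eq_mul_aeval {R S : Type*} [CommSemiring R] [Semiring S]
    [Algebra R S] {a b z : S} (h : a * z = z * b) (p : R[X]) :
    aeval a p * z = z * aeval b p := by
  induction p using Polynomial.induction_on' with
  | add p q hp hq => rw [map_add, map_add, add_mul, mul_add, hp, hq]
  | monomial k r =>
    have hk : a ^ k * z = z * b ^ k := ((show SemiconjBy z b a from h.symm).pow_right k).eq.symm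
    rw [aeval_monomial, aeval_monomial, mul_assoc, hk, ← mul_assoc, Algebra.commutes, mul_assoc]

namespace Matrix

variable {K n : Type*} [Field K] [Fintype n] [DecidableEq n]

theorem eq_zero_of_mul_eq_mul_of_disjoint_spectrum [IsAlgClosed K] {A B Z : Matrix n n K}
    (h : A * Z = Z * B) (hAB : Disjoint (spectrum K A) (spectrum K B)) : Z = 0 := by
  cases isEmpty_or_nonempty n
  · exact Subsingleton.elim _ _
  have hunit : IsUnit (aeval A B.charpoly) := by
    rw [← spectrum.zero_notMem_iff K, spectrum.map_polynomial_aeval_of_degree_pos _ _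
      (by rw [charpoly_degree_eq_dim]; exact_mod_cast Fintype.card_pos)]
    rintro ⟨μ, hμA, hμB⟩
    exact hAB.ne_of_mem hμA (mem_spectrum_iff_isRoot_charpoly.mpr hμB) rfl
  have hZ : aeval A B.charpoly * Z = 0 := by
    rw [aeval_mul_eq_mul_aeval h, aeval_self_charpoly, mul_zero]
  exact hunit.mul_right_eq_zero.mp hZ

theorem mem_spectrum_inv_mul_iff {G H : Matrix n n K} (hH : IsUnit H.det) (μ : K) :
    μ ∈ spectrum K (H⁻¹ * G) ↔ (μ • H - G).det = 0 := by
  have hfactor : μ • H - G = H * (algebraMap K _ μ - H⁻¹ * G) := by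
    rw [mul_sub, Algebra.algebraMap_eq_smul_one, mul_smul_comm, mul_one,
      mul_nonsing_inv_cancel_left _ _ hH]
  rw [spectrum.mem_iff, isUnit_iff_isUnit_det, hfactor, det_mul, mul_eq_zero,
    or_iff_right hH.ne_zero, isUnit_iff_ne_zero, not_not]

theorem transpose_inv_mul_transpose_mul_eq_mul_inv_mul {G H Z : Matrix n n K}
    (hG : IsUnit G.det) (hH : IsUnit H.det) (h : Gᵀ * Z = Zᵀ * H) :
    Gᵀ⁻¹ * Hᵀ * Z = Z * (H⁻¹ * G) := by
  have hZT : Zᵀ = Gᵀ * Z * H⁻¹ := by rw [h, mul_nonsing_inv_cancel_right _ _ hH]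
  have hHT : Hᵀ * Z = Zᵀ * G := by
    simpa only [transpose_mul, transpose_transpose] using (congrArg transpose h).symm
  rw [mul_assoc, hHT, hZT, mul_assoc, mul_assoc, nonsing_inv_mul_cancel_left _ _
    (by rwa [det_transpose])]

end Matrix

section Pencil

variable {k : ℕ} {A B : Matrix (Fin k) (Fin k) ℂ}

theorem PencilRegular.finite_setOf_det_eq_zero (h : PencilRegular A B) :
    {z : ℂ | (A + z • B).det = 0}.Finite := by
  let p : ℂ[X] := (A.map C + (X : ℂ[X]) • B.map C).det
  have hp : ∀ z, p.eval z = (A + z • B).det := fun z => by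
    rw [← coe_evalRingHom, RingHom.map_det]
    congr 1
    ext i j
    simp [-X_mul_C]
  obtain ⟨z, hz⟩ := h
  have hp0 : p ≠ 0 := fun hp0 => hz (by rw [← hp, hp0, eval_zero])
  exact (finite_setOfPred_isRoot hp0).subset fun w hw => (hp w).trans hw

theorem PencilRegular.exists_sq_ne_one_det_ne_zero (h : PencilRegular A B) :
    ∃ z : ℂ, z ^ 2 ≠ 1 ∧ (A + z • B).det ≠ 0 ∧ (B + z • A).det ≠ 0 := by
  have hS := h.finite_setOf_det_eq_zero
  obtain ⟨z, hz⟩ := (hS.union (hS.inv.union ({0, 1, -1} : Set ℂ).toFinite)).exists_notMem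
  simp only [Set.mem_union, Set.mem_inv, Set.mem_ofPred_eq, Set.mem_insert_iff,
    Set.mem_singleton_iff, not_or] at hz
  obtain ⟨hzS, hzS', hz0, hz1, hz1'⟩ := hz
  refine ⟨z, fun hsq => ?_, hzS, ?_⟩
  · rw [sq, mul_self_eq_one_iff] at hsq
    exact hsq.elim hz1 hz1'
  · rw [show B + z • A = z • (A + z⁻¹ • B) by
      rw [smul_add, smul_smul, mul_inv_cancel₀ hz0, one_smul, add_comm], det_smul]
    exact mul_ne_zero (pow_ne_zero _ hz0) hzS'

theorem PencilReciprocalFree.det_ne_zero_of_det_eq_zero (h : PencilReciprocalFree A B)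
    {a b : ℂ} (hab : a ≠ 0 ∨ b ≠ 0) (hdet : (a • A + b • B).det = 0) :
    (b • A + a • B).det ≠ 0 := by
  have det_smul_eq_zero {c : ℂ} (hc : c ≠ 0) (X : Matrix (Fin k) (Fin k) ℂ) :
      (c • X).det = 0 ↔ X.det = 0 := by
    simp [hc]
  intro hdet'
  rcases eq_or_ne a 0 with rfl | ha
  · have hb := hab.resolve_left (not_not_intro rfl)
    simp only [zero_smul, zero_add, add_zero, det_smul_eq_zero hb] at hdet hdet'
    exact h.2 ⟨hdet', hdet⟩
  rcases eq_or_ne b 0 with rfl | hb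
  · simp only [zero_smul, zero_add, add_zero, det_smul_eq_zero ha] at hdet hdet'
    exact h.2 ⟨hdet, hdet'⟩
  refine h.1 ⟨b / a, a / b, by field_simp, ?_, ?_⟩
  · rwa [← det_smul_eq_zero ha, smul_add, smul_smul, mul_div_cancel₀ _ ha]
  · rwa [← det_smul_eq_zero hb, smul_add, smul_smul, mul_div_cancel₀ _ hb]

theorem PencilReciprocalFree.eq_zero_of_transpose_mul_eq (hrf : PencilReciprocalFree A B)
    (hreg : PencilRegular A B) {Z : Matrix (Fin k) (Fin k) ℂ} (h : Aᵀ * Z = Zᵀ * B) :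
    Z = 0 := by
  obtain ⟨z, hz, hG, hH⟩ := hreg.exists_sq_ne_one_det_ne_zero
  have h' : Bᵀ * Z = Zᵀ * A := by
    simpa only [transpose_mul, transpose_transpose] using (congrArg transpose h).symm
  have hGH : (A + z • B)ᵀ * Z = Zᵀ * (B + z • A) := by
    simp only [transpose_add, transpose_smul, add_mul, mul_add, Matrix.smul_mul, Matrix.mul_smul,
      h, h']
  refine eq_zero_of_mul_eq_mul_of_disjoint_spectrum
    (transpose_inv_mul_transpose_mul_eq_mul_inv_mul hG.isUnit hH.isUnit hGH) ?_
  refine Set.disjoint_left.mpr fun μ hμG hμH => ?_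
  rw [mem_spectrum_inv_mul_iff (by rw [det_transpose]; exact hG.isUnit), ← transpose_smul,
    ← transpose_sub, det_transpose] at hμG
  rw [mem_spectrum_inv_mul_iff hH.isUnit] at hμH
  have hab : μ - z ≠ 0 ∨ μ * z - 1 ≠ 0 := by
    by_contra! hab
    exact hz (by linear_combination hab.2 - z * hab.1)
  refine hrf.det_ne_zero_of_det_eq_zero hab ?_ ?_
  · rwa [show (μ - z) • A + (μ * z - 1) • B = μ • (A + z • B) - (B + z • A) by module]
  · rwa [show (μ * z - 1) • A + (μ - z) • B = μ • (B + z • A) - (A + z • B) by module]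

end Pencil

theorem deflating_subspace_isotropic_general
    (n ℓ : ℕ) (M : Matrix (Fin (2 * n)) (Fin (2 * n)) ℂ)
    (U V : Matrix (Fin (2 * n)) (Fin ℓ) ℂ)
    (A' B' : Matrix (Fin ℓ) (Fin ℓ) ℂ)
    (hMU : M * U = V * A') (hMTU : Mᵀ * U = V * B')
    (hreg : PencilRegular A' B') (hrf : PencilReciprocalFree A' B') :
    Uᵀ * M * U = 0 := by
  have hA : Uᵀ * M * U = (Vᵀ * U)ᵀ * A' := by
    rw [Matrix.mul_assoc, hMU, transpose_mul, transpose_transpose, Matrix.mul_assoc]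
  have hB : Uᵀ * Mᵀ * U = (Vᵀ * U)ᵀ * B' := by
    rw [Matrix.mul_assoc, hMTU, transpose_mul, transpose_transpose, Matrix.mul_assoc]
  have hZ : A'ᵀ * (Vᵀ * U) = (Vᵀ * U)ᵀ * B' := calc
    A'ᵀ * (Vᵀ * U) = (Uᵀ * M * U)ᵀ := by rw [hA, transpose_mul, transpose_transpose]
    _ = Uᵀ * Mᵀ * U := by rw [transpose_mul, transpose_mul, transpose_transpose, Matrix.mul_assoc]
    _ = (Vᵀ * U)ᵀ * B' := hB
  rw [hA, hrf.eq_zero_of_transpose_mul_eq hreg hZ, transpose_zero, zero_mul]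

/-- If the ⊤-palindromic pencil `φ(z) = M + z Mᵀ` is regular, `U` has rank
`ℓ`, and `M U = V A'`, `Mᵀ U = V B'` with `A' + z B'` regular and with reciprocal-free
spectrum, then the column span of `U` is isotropic for `φ(z)`, i.e. `Uᵀ M U = 0`. -/
theorem deflating_subspace_isotropic
    (n ℓ : ℕ) (M : Matrix (Fin (2 * n)) (Fin (2 * n)) ℂ)
    (hφ : PencilRegular M Mᵀ)
    (U V : Matrix (Fin (2 * n)) (Fin ℓ) ℂ) (hU : U.rank = ℓ)
    (A' B' : Matrix (Fin ℓ) (Fin ℓ) ℂ)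
    (hMU : M * U = V * A') (hMTU : Mᵀ * U = V * B')
    (hreg : PencilRegular A' B') (hrf : PencilReciprocalFree A' B') :
    Uᵀ * M * U = 0 :=
  deflating_subspace_isotropic_general n ℓ M U V A' B' hMU hMTU hreg hrf
end

section
/- Let m, n ≥ 1, A, A' ∈ ℂ^{m×m}, B, B' ∈ ℂ^{n×n}, and C, C' ∈ ℂ^{m×n}. The system of matrix equations AX − YB = C and A'X − YB' = C' admits a unique solution (X, Y) ∈ ℂ^{m×n} × ℂ^{m×n} if and only if the pencils A − λA' and B − λB' are regular with disjoint spectra (including the eigenvalue at infinity); equivalently, if and only if for every pair (μ, ν) ∈ ℂ² with (μ, ν) ≠ (0, 0), det(μA − νA') and det(μB − νB') do not both vanish. -/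
/-!
The map `T (X, Y) = (A X - Y B, A' X - Y B')` is an endomorphism of a finite-dimensional space,
so unique solvability means that `T` is injective.

If `(μ, ν) ≠ (0, 0)` is a common eigenvalue, take a left null vector `x` of `μ A - ν A'`, a right
null vector `y` of `μ B - ν B'` and `W = y xᵀ`. Then `(U, V) = (μ W, -ν W) ≠ 0` satisfies
`U A + V A' = 0 = B U + B' V`, so the functional `(C, C') ↦ tr (U C) + tr (V C')` vanishes on the
range of `T`, and `T` is not surjective.

Conversely, a square pencil of positive size always has an eigenvalue in `ℙ¹`, so disjointness of
the spectra forces both pencils to be regular, and some `t` makes `A - t A'` and `B - t B'`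
invertible. A kernel element `(X, Y)` of `T` then satisfies `P Y = Y Q` for
`P = A' (A - t A')⁻¹` and `Q = B' (B - t B')⁻¹`, whose eigenvalues `a` are the pencil eigenvalues
`(a : a t + 1)`. These are disjoint, so `χ_P (Q)` is invertible, and `Y χ_P (Q) = χ_P (P) Y = 0`
gives `Y = 0`, hence `X = 0`.
-/

open scoped Matrix

open Matrix Polynomial

theorem LinearMap.existsUnique_eq_iff_injective {K V : Type*} [DivisionRing K] [AddCommGroup V]
    [Module K V] [FiniteDimensional K V] (f : V →ₗ[K] V) (c : V) :
    (∃! p, f p = c) ↔ Function.Injective f := by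
  refine ⟨fun ⟨p, hp, huniq⟩ ↦ ?_, fun hf ↦ ?_⟩
  · refine (injective_iff_map_eq_zero f).2 fun q hq ↦ ?_
    simpa using huniq (p + q) (by simp only [map_add, hp, hq, add_zero])
  · obtain ⟨p, hp⟩ := LinearMap.injective_iff_surjective.1 hf c
    exact ⟨p, hp, fun q hq ↦ hf (hq.trans hp.symm)⟩

namespace Matrix

variable {K m n : Type*} [Field K] [Fintype m] [Fintype n]

def sylvesterMap (A A' : Matrix m m K) (B B' : Matrix n n K) :
    Matrix m n K × Matrix m n K →ₗ[K] Matrix m n K × Matrix m n K where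
  toFun p := (A * p.1 - p.2 * B, A' * p.1 - p.2 * B')
  map_add' p q := by
    ext : 1 <;> simp only [Prod.fst_add, Prod.snd_add, Matrix.mul_add, Matrix.add_mul] <;> abel
  map_smul' c p := by
    ext : 1 <;> simp only [Prod.smul_fst, Prod.smul_snd, Matrix.mul_smul, Matrix.smul_mul,
      smul_sub, RingHom.id_apply]

theorem sylvesterMap_apply (A A' : Matrix m m K) (B B' : Matrix n n K) (X Y : Matrix m n K) :
    sylvesterMap A A' B B' (X, Y) = (A * X - Y * B, A' * X - Y * B') := rfl

theorem not_surjective_sylvesterMap {A A' : Matrix m m K} {B B' : Matrix n n K}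
    {U V : Matrix n m K} (hUV : U ≠ 0 ∨ V ≠ 0) (hA : U * A + V * A' = 0)
    (hB : B * U + B' * V = 0) : ¬ Function.Surjective (sylvesterMap A A' B B') := by
  intro hsurj
  have hvanish : ∀ C C' : Matrix m n K, trace (U * C) + trace (V * C') = 0 := by
    intro C C'
    obtain ⟨⟨X, Y⟩, hXY⟩ := hsurj (C, C')
    rw [sylvesterMap_apply, Prod.mk.injEq] at hXY
    rw [← hXY.1, ← hXY.2]
    calc trace (U * (A * X - Y * B)) + trace (V * (A' * X - Y * B'))
        = trace ((U * A + V * A') * X) - trace ((B * U + B' * V) * Y) := by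
          simp only [Matrix.mul_sub, Matrix.add_mul, trace_sub, trace_add, ← Matrix.mul_assoc,
            trace_mul_cycle U Y B, trace_mul_cycle V Y B']
          ring
      _ = 0 := by rw [hA, hB, Matrix.zero_mul, Matrix.zero_mul, trace_zero, sub_zero]
  have hU : U = 0 := ext_iff_trace_mul_right.2 fun C ↦ by simpa using hvanish C 0
  have hV : V = 0 := ext_iff_trace_mul_right.2 fun C ↦ by simpa using hvanish 0 C
  exact hUV.elim (· hU) (· hV)

variable [DecidableEq m] [DecidableEq n]

theorem not_injective_sylvesterMap_of_det_eq_zero {A A' : Matrix m m K} {B B' : Matrix n n K}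
    {μ ν : K} (hμν : (μ, ν) ≠ (0, 0)) (hA : (μ • A - ν • A').det = 0)
    (hB : (μ • B - ν • B').det = 0) : ¬ Function.Injective (sylvesterMap A A' B B') := by
  obtain ⟨x, hx0, hx⟩ := exists_vecMul_eq_zero_iff.2 hA
  obtain ⟨y, hy0, hy⟩ := exists_mulVec_eq_zero_iff.2 hB
  have hW : vecMulVec y x ≠ 0 := by
    obtain ⟨i, hi⟩ := Function.ne_iff.1 hy0
    obtain ⟨j, hj⟩ := Function.ne_iff.1 hx0
    exact fun h ↦ mul_ne_zero hi hj congr($h i j)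
  refine fun hinj ↦ not_surjective_sylvesterMap (U := μ • vecMulVec y x)
    (V := -ν • vecMulVec y x) ?_ ?_ ?_ (LinearMap.injective_iff_surjective.1 hinj)
  · by_contra! h
    exact hμν (by simpa [hW] using h)
  · rw [Matrix.smul_mul, Matrix.smul_mul, ← Matrix.mul_smul, ← Matrix.mul_smul, ← Matrix.mul_add,
      neg_smul, ← sub_eq_add_neg, vecMulVec_mul, hx]
    exact ext fun _ _ ↦ mul_zero _
  · rw [Matrix.mul_smul, Matrix.mul_smul, ← Matrix.smul_mul, ← Matrix.smul_mul, ← Matrix.add_mul,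
      neg_smul, ← sub_eq_add_neg, mul_vecMulVec, hy, zero_vecMulVec]

/-- `det (A - X • A')`, written in the shape of `Polynomial.coeff_det_X_add_C_card`. -/
noncomputable def pencilPoly (A A' : Matrix n n K) : K[X] :=
  det ((X : K[X]) • (-A').map C + A.map C)

theorem eval_pencilPoly (A A' : Matrix n n K) (t : K) :
    (pencilPoly A A').eval t = (A - t • A').det := by
  rw [pencilPoly, ← coe_evalRingHom, RingHom.map_det]
  congr 1
  ext i j
  simp only [RingHom.mapMatrix_apply, map_apply, add_apply, smul_apply, map_apply, coe_evalRingHom,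
    eval_add, smul_eq_mul, eval_mul, eval_X, eval_C, neg_apply, sub_apply]
  ring

theorem coeff_pencilPoly_card (A A' : Matrix n n K) :
    (pencilPoly A A').coeff (Fintype.card n) = (-A').det :=
  coeff_det_X_add_C_card _ _

theorem det_smul_sub_smul_eq_zero_of_pencilPoly_eq_zero {A A' : Matrix n n K}
    (h : pencilPoly A A' = 0) (μ ν : K) : (μ • A - ν • A').det = 0 := by
  rcases eq_or_ne μ 0 with rfl | hμ
  · have hA' : (-A').det = 0 := by rw [← coeff_pencilPoly_card, h, coeff_zero]
    rw [zero_smul, zero_sub, ← smul_neg, det_smul, hA', mul_zero]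
  · have hdet : (A - (ν / μ) • A').det = 0 := by rw [← eval_pencilPoly, h, eval_zero]
    rw [show μ • A - ν • A' = μ • (A - (ν / μ) • A') by
      rw [smul_sub, smul_smul, mul_div_cancel₀ _ hμ], det_smul, hdet, mul_zero]

theorem exists_det_smul_sub_smul_eq_zero [IsAlgClosed K] [Nonempty n] (B B' : Matrix n n K) :
    ∃ μ ν : K, (μ, ν) ≠ (0, 0) ∧ (μ • B - ν • B').det = 0 := by
  by_cases hB' : (-B').det = 0
  · exact ⟨0, 1, by simp, by simpa using hB'⟩
  have hdeg : 0 < (pencilPoly B B').degree := by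
    rw [← natDegree_pos_iff_degree_pos]
    exact Fintype.card_pos.trans_le (le_natDegree_of_ne_zero (by rwa [coeff_pencilPoly_card]))
  obtain ⟨t, ht⟩ := IsAlgClosed.exists_root _ hdeg.ne'
  exact ⟨1, t, by simp, by rwa [one_smul, ← eval_pencilPoly]⟩

theorem pencilPoly_ne_zero [IsAlgClosed K] [Nonempty n] {A A' : Matrix m m K}
    {B B' : Matrix n n K}
    (H : ∀ μ ν : K, (μ, ν) ≠ (0, 0) → ¬ ((μ • A - ν • A').det = 0 ∧ (μ • B - ν • B').det = 0)) :
    pencilPoly A A' ≠ 0 := fun h ↦ by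
  obtain ⟨μ, ν, hμν, hB⟩ := exists_det_smul_sub_smul_eq_zero B B'
  exact H μ ν hμν ⟨det_smul_sub_smul_eq_zero_of_pencilPoly_eq_zero h μ ν, hB⟩

theorem exists_isUnit_det_sub_smul [IsAlgClosed K] [Nonempty m] [Nonempty n]
    {A A' : Matrix m m K} {B B' : Matrix n n K}
    (H : ∀ μ ν : K, (μ, ν) ≠ (0, 0) → ¬ ((μ • A - ν • A').det = 0 ∧ (μ • B - ν • B').det = 0)) :
    ∃ t : K, IsUnit (A - t • A').det ∧ IsUnit (B - t • B').det := by
  have hAB : pencilPoly A A' * pencilPoly B B' ≠ 0 :=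
    mul_ne_zero (pencilPoly_ne_zero H) (pencilPoly_ne_zero fun μ ν h hc ↦ H μ ν h hc.symm)
  obtain ⟨t, ht⟩ : ∃ t, (pencilPoly A A' * pencilPoly B B').eval t ≠ 0 := by
    by_contra! h
    exact hAB (Polynomial.funext (by simpa using h))
  rw [eval_mul, eval_pencilPoly, eval_pencilPoly] at ht
  exact ⟨t, (left_ne_zero_of_mul ht).isUnit, (right_ne_zero_of_mul ht).isUnit⟩

theorem pow_mul_eq_mul_pow_of_mul_eq_mul {R : Type*} [Semiring R] {P : Matrix m m R}
    {Q : Matrix n n R} {Y : Matrix m n R} (h : P * Y = Y * Q) (k : ℕ) :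
    P ^ k * Y = Y * Q ^ k := by
  induction k with
  | zero => simp
  | succ k ih => rw [pow_succ, pow_succ, Matrix.mul_assoc, h, ← Matrix.mul_assoc, ih,
      Matrix.mul_assoc]

theorem aeval_mul_eq_mul_aeval_of_mul_eq_mul {R : Type*} [CommSemiring R] {P : Matrix m m R}
    {Q : Matrix n n R} {Y : Matrix m n R} (h : P * Y = Y * Q) (p : R[X]) :
    aeval P p * Y = Y * aeval Q p := by
  induction p using Polynomial.induction_on' with
  | add p q hp hq => rw [map_add, map_add, Matrix.add_mul, Matrix.mul_add, hp, hq]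
  | monomial k a =>
    rw [aeval_monomial, aeval_monomial, Algebra.algebraMap_eq_smul_one,
      Algebra.algebraMap_eq_smul_one, smul_one_mul, smul_one_mul, Matrix.smul_mul, Matrix.mul_smul,
      pow_mul_eq_mul_pow_of_mul_eq_mul h]

theorem eq_zero_of_mul_eq_mul_of_disjoint_spectrum_s11 [IsAlgClosed K] {P : Matrix m m K}
    {Q : Matrix n n K} {Y : Matrix m n K} (hPQ : Disjoint (spectrum K P) (spectrum K Q))
    (h : P * Y = Y * Q) : Y = 0 := by
  have hunit : IsUnit (aeval Q P.charpoly) := by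
    nontriviality Matrix n n K
    rw [← spectrum.zero_notMem_iff K, spectrum.map_polynomial_aeval_of_nonempty _ _
      (spectrum.nonempty_of_isAlgClosed_of_finiteDimensional K Q)]
    rintro ⟨b, hbQ, hb⟩
    exact hPQ.ne_of_mem (mem_spectrum_iff_isRoot_charpoly.2 hb) hbQ rfl
  have hY : Y * aeval Q P.charpoly = 0 := by
    rw [← aeval_mul_eq_mul_aeval_of_mul_eq_mul h, aeval_self_charpoly, Matrix.zero_mul]
  obtain ⟨u, hu⟩ := hunit
  calc Y = Y * (u * u⁻¹ : (Matrix n n K)ˣ).val := by simp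
    _ = 0 := by rw [Units.val_mul, ← Matrix.mul_assoc, hu, hY, Matrix.zero_mul]

theorem mem_spectrum_mul_inv_iff {A A' : Matrix n n K} {t : K} (ht : IsUnit (A - t • A').det)
    (a : K) : a ∈ spectrum K (A' * (A - t • A')⁻¹) ↔ (a • A - (a * t + 1) • A').det = 0 := by
  have hfactor : algebraMap K (Matrix n n K) a - A' * (A - t • A')⁻¹ =
      (a • A - (a * t + 1) • A') * (A - t • A')⁻¹ := by
    rw [Algebra.algebraMap_eq_smul_one,
      show a • A - (a * t + 1) • A' = a • (A - t • A') - A' by module, Matrix.sub_mul,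
      Matrix.smul_mul, mul_nonsing_inv _ ht]
  rw [spectrum.mem_iff, hfactor, isUnit_iff_isUnit_det, det_mul, IsUnit.mul_iff,
    and_iff_left (isUnit_nonsing_inv_det _ ht), isUnit_iff_ne_zero, not_not]

theorem injective_sylvesterMap [IsAlgClosed K] {A A' : Matrix m m K} {B B' : Matrix n n K}
    {t : K} (hAt : IsUnit (A - t • A').det) (hBt : IsUnit (B - t • B').det)
    (H : ∀ μ ν : K, (μ, ν) ≠ (0, 0) → ¬ ((μ • A - ν • A').det = 0 ∧ (μ • B - ν • B').det = 0)) :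
    Function.Injective (sylvesterMap A A' B B') := by
  refine (injective_iff_map_eq_zero _).2 fun ⟨X, Y⟩ h ↦ ?_
  rw [sylvesterMap_apply, Prod.mk_eq_zero, sub_eq_zero, sub_eq_zero] at h
  obtain ⟨hAB, hAB'⟩ := h
  set At := A - t • A'
  set Bt := B - t • B'
  have hXY : At * X = Y * Bt := by
    rw [Matrix.sub_mul, Matrix.mul_sub, Matrix.smul_mul, Matrix.mul_smul, hAB, hAB']
  have hX : X = At⁻¹ * (Y * Bt) := by
    rw [← hXY, ← Matrix.mul_assoc, nonsing_inv_mul _ hAt, Matrix.one_mul]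
  have hPQ : A' * At⁻¹ * Y = Y * (B' * Bt⁻¹) := by
    calc A' * At⁻¹ * Y = A' * (At⁻¹ * (Y * Bt)) * Bt⁻¹ := by
          rw [← Matrix.mul_assoc At⁻¹, ← Matrix.mul_assoc, Matrix.mul_assoc _ Bt,
            mul_nonsing_inv _ hBt, Matrix.mul_one, Matrix.mul_assoc]
      _ = Y * (B' * Bt⁻¹) := by rw [← hX, hAB', Matrix.mul_assoc]
  have hdisj : Disjoint (spectrum K (A' * At⁻¹)) (spectrum K (B' * Bt⁻¹)) := by
    refine Set.disjoint_left.2 fun a haA haB ↦ H a (a * t + 1) ?_ ⟨?_, ?_⟩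
    · intro h
      obtain ⟨rfl, h⟩ := Prod.mk.inj h
      simp at h
    · exact (mem_spectrum_mul_inv_iff hAt a).1 haA
    · exact (mem_spectrum_mul_inv_iff hBt a).1 haB
  have hY : Y = 0 := eq_zero_of_mul_eq_mul_of_disjoint_spectrum_s11 hdisj hPQ
  simp [hX, hY]

end Matrix

/-- Stewart: the system of matrix equations `A X − Y B = C`,
`A' X − Y B' = C'` admits a unique solution `(X, Y)` if and only if the pencils
`A − λ A'` and `B − λ B'` are regular with disjoint spectra (including infinity);
in homogeneous coordinates: for every `(μ, ν) ≠ (0, 0)`, `det (μ A − ν A')` and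
`det (μ B − ν B')` do not both vanish. -/
theorem sylvester_system_unique_solution_iff
    (m n : ℕ) (hm : 1 ≤ m) (hn : 1 ≤ n)
    (A A' : Matrix (Fin m) (Fin m) ℂ) (B B' : Matrix (Fin n) (Fin n) ℂ)
    (C C' : Matrix (Fin m) (Fin n) ℂ) :
    (∃! p : Matrix (Fin m) (Fin n) ℂ × Matrix (Fin m) (Fin n) ℂ,
        A * p.1 - p.2 * B = C ∧ A' * p.1 - p.2 * B' = C') ↔
    ∀ μ ν : ℂ, (μ, ν) ≠ (0, 0) →
      ¬ ((μ • A - ν • A').det = 0 ∧ (μ • B - ν • B').det = 0) := by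
  have : Nonempty (Fin m) := ⟨⟨0, hm⟩⟩
  have : Nonempty (Fin n) := ⟨⟨0, hn⟩⟩
  have hsol : ∀ p, (A * p.1 - p.2 * B = C ∧ A' * p.1 - p.2 * B' = C') ↔
      sylvesterMap A A' B B' p = (C, C') := fun p ↦
    (Prod.ext_iff (x := sylvesterMap A A' B B' p) (y := (C, C'))).symm
  rw [existsUnique_congr hsol, LinearMap.existsUnique_eq_iff_injective]
  constructor
  · rintro hinj μ ν hμν ⟨hA, hB⟩
    exact not_injective_sylvesterMap_of_det_eq_zero hμν hA hB hinj
  · intro H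
    obtain ⟨t, hAt, hBt⟩ := exists_isUnit_det_sub_smul H
    exact injective_sylvesterMap hAt hBt H
end

section
/- Let A, B, C, D ∈ ℂ^{n×n}, M = [[C, D],[A, −B]] ∈ ℂ^{2n×2n}, and define 𝓐₋₁ = [[0, C],[0, A]], 𝓐₀ = [[D, Cᵀ],[−B, Dᵀ]], 𝓐₁ = [[Aᵀ, 0],[−Bᵀ, 0]] (all in 2×2 block form with n×n blocks). Then for every z ∈ ℂ, det(𝓐₋₁ + z𝓐₀ + z²𝓐₁) = (−1)ⁿ zⁿ det(M + zMᵀ). -/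
open scoped Matrix

lemma sign_sumComm_fin (n : ℕ) :
    Equiv.Perm.sign ((Equiv.sumComm (Fin n) (Fin n)) : Equiv.Perm (Fin n ⊕ Fin n))
      = (-1) ^ n := by
  have h : ((Equiv.sumComm (Fin n) (Fin n)) : Equiv.Perm (Fin n ⊕ Fin n))
      = (Equiv.boolProdEquivSum (Fin n)).permCongr
          (Equiv.prodCongrLeft fun _ : Fin n => Equiv.swap false true) := by
    ext x
    rcases x with a | a <;> rfl
  rw [h, Equiv.Perm.sign_permCongr, Equiv.Perm.sign_prodCongrLeft]
  simp [Equiv.Perm.sign_swap]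

/-- the determinant of the quadraticization
`𝓠(z) = 𝓐₋₁ + z 𝓐₀ + z² 𝓐₁` of the ⊤-palindromic pencil `φ(z) = M + z Mᵀ`
(with `M = [[C, D], [A, −B]]`) satisfies `det 𝓠(z) = (−1)ⁿ zⁿ det φ(z)`. -/
theorem quadraticization_det
    (n : ℕ) (A B C D : Matrix (Fin n) (Fin n) ℂ) :
    ∀ M Am1 A0 A1 : Matrix (Fin n ⊕ Fin n) (Fin n ⊕ Fin n) ℂ,
      M = Matrix.fromBlocks C D A (-B) →
      Am1 = Matrix.fromBlocks 0 C 0 A →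
      A0 = Matrix.fromBlocks D Cᵀ (-B) Dᵀ →
      A1 = Matrix.fromBlocks Aᵀ 0 (-Bᵀ) 0 →
      ∀ z : ℂ, (Am1 + z • A0 + z ^ 2 • A1).det
        = (-1) ^ n * z ^ n * (M + z • Mᵀ).det := by
  rintro M Am1 A0 A1 rfl rfl rfl rfl z
  set K : Matrix (Fin n ⊕ Fin n) (Fin n ⊕ Fin n) ℂ :=
    Matrix.fromBlocks 0 1 (z • 1) 0 with hK
  have h1 : (Matrix.fromBlocks 0 C 0 A : Matrix (Fin n ⊕ Fin n) (Fin n ⊕ Fin n) ℂ)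
      + z • Matrix.fromBlocks D Cᵀ (-B) Dᵀ + z ^ 2 • Matrix.fromBlocks Aᵀ 0 (-Bᵀ) 0
      = (Matrix.fromBlocks C D A (-B) + z • (Matrix.fromBlocks C D A (-B))ᵀ) * K := by
    rw [hK, Matrix.fromBlocks_transpose]
    simp only [Matrix.fromBlocks_smul, Matrix.fromBlocks_add, Matrix.fromBlocks_multiply]
    rw [Matrix.fromBlocks_inj]
    refine ⟨?_, ?_, ?_, ?_⟩ <;>
      simp [Matrix.add_mul, Matrix.mul_smul, smul_smul, pow_two]
  have hdetK : K.det = (-1) ^ n * z ^ n := by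
    have hperm : (K.submatrix (Equiv.sumComm (Fin n) (Fin n)) id)
        = Matrix.fromBlocks (z • 1) 0 0 (1 : Matrix (Fin n) (Fin n) ℂ) := by
      ext i j
      rcases i with a | a <;> rcases j with b | b <;> rfl
    have := Matrix.det_permute (n := Fin n ⊕ Fin n) (Equiv.sumComm (Fin n) (Fin n)) K
    rw [hperm, sign_sumComm_fin] at this
    have hd : (Matrix.fromBlocks (z • (1 : Matrix (Fin n) (Fin n) ℂ)) 0 0 (1 : Matrix (Fin n) (Fin n) ℂ)).det = z ^ n := by
      rw [Matrix.det_fromBlocks_zero₂₁]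
      simp [Matrix.det_smul]
    rw [hd] at this
    have hs : ((-1 : ℂ) ^ n) * ((-1 : ℂ) ^ n * z ^ n) = z ^ n := by
      rw [← mul_assoc, ← pow_add, ← two_mul, pow_mul]; simp
    calc K.det = ((-1 : ℂ) ^ n) * (((-1 : ℂ) ^ n) * K.det) := by
          rw [← mul_assoc, ← pow_add, ← two_mul, pow_mul]; simp
      _ = (-1) ^ n * z ^ n := by
          push_cast at this
          rw [this]
  rw [h1, Matrix.det_mul, hdetK]
  ring
end

section
/- Let A, B, C, D ∈ ℂ^{n×n} and define 𝓐₋₁ = [[0, C],[0, A]], 𝓐₀ = [[D, Cᵀ],[−B, Dᵀ]], 𝓐₁ = [[Aᵀ, 0],[−Bᵀ, 0]] (2×2 block form with n×n blocks). Suppose S ∈ ℂ^{n×n} satisfies DS + SᵀA − SᵀBS + C = 0 and that Dᵀ − BᵀS is invertible, and set W = −(Dᵀ − BᵀS)⁻¹(A − BS) and G = [[0, S],[0, W]]. Then 𝓐₋₁ + 𝓐₀G + 𝓐₁G² = 0; moreover, the spectral radius of G equals the spectral radius of W, so if the spectral radius of W is less than 1 then G is a solution of the quadratic matrix equation with spectral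 radius less than 1. -/
/-!
Writing `G = [[0, S], [0, W]]`, the block `(2,2)` of `𝓐₋₁ + 𝓐₀ G + 𝓐₁ G²` is
`(A - B S) + (Dᵀ - Bᵀ S) W`, which vanishes by the choice of `W`; the block `(1,2)` is
`C + D S + (Cᵀ + Aᵀ S) W`, and the transposed ⊤-NARE says `Cᵀ + Aᵀ S = -Sᵀ (Dᵀ - Bᵀ S)`,
which turns it into the ⊤-NARE itself. Since `G` is block upper triangular, its spectrum is
that of the zero block together with that of `W`, so both have the same spectral radius.
-/

open scoped Matrix

namespace Matrix

variable {m n R : Type*} [Fintype m] [Fintype n] [DecidableEq m] [DecidableEq n]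

theorem algebraMap_sub_fromBlocks_zero₂₁ [CommRing R] (r : R) (P : Matrix m m R)
    (Q : Matrix m n R) (T : Matrix n n R) :
    algebraMap R (Matrix (m ⊕ n) (m ⊕ n) R) r - fromBlocks P Q 0 T =
      fromBlocks (algebraMap R _ r - P) (-Q) 0 (algebraMap R _ r - T) := by
  ext (i | i) (j | j) <;> simp [algebraMap_eq_diagonal, diagonal_apply]

theorem spectrum_fromBlocks_zero₂₁ [CommRing R] (P : Matrix m m R) (Q : Matrix m n R)
    (T : Matrix n n R) :
    spectrum R (fromBlocks P Q 0 T) = spectrum R P ∪ spectrum R T := by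
  ext r
  simp only [Set.mem_union, spectrum.mem_iff, algebraMap_sub_fromBlocks_zero₂₁,
    isUnit_iff_isUnit_det (fromBlocks _ _ _ _), det_fromBlocks_zero₂₁, IsUnit.mul_iff,
    isUnit_iff_isUnit_det (_ - P), isUnit_iff_isUnit_det (_ - T), not_and_or]

theorem spectralRadius_fromBlocks_zero₂₁ {𝕜 : Type*} [NormedField 𝕜] (P : Matrix m m 𝕜)
    (Q : Matrix m n 𝕜) (T : Matrix n n 𝕜) :
    spectralRadius 𝕜 (fromBlocks P Q 0 T) =
      max (spectralRadius 𝕜 P) (spectralRadius 𝕜 T) := by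
  rw [spectralRadius, spectrum_fromBlocks_zero₂₁, iSup_union]
  rfl

end Matrix

section TNARE

open Matrix

variable {m R : Type*} [Fintype m] [CommRing R] {A B C D S W : Matrix m m R}

theorem tNARE_transpose (hS : D * S + Sᵀ * A - Sᵀ * B * S + C = 0) :
    Cᵀ + Aᵀ * S + Sᵀ * (Dᵀ - Bᵀ * S) = 0 :=
  calc _ = (D * S + Sᵀ * A - Sᵀ * B * S + C)ᵀ := by
        simp only [transpose_add, transpose_sub, transpose_mul, transpose_transpose]
        noncomm_ring
    _ = 0 := by rw [hS, transpose_zero]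

theorem fromBlocks_quadratic_eq_zero_of_tNARE [DecidableEq m]
    (hS : D * S + Sᵀ * A - Sᵀ * B * S + C = 0) (hW : (Dᵀ - Bᵀ * S) * W = -(A - B * S)) :
    fromBlocks 0 C 0 A + fromBlocks D Cᵀ (-B) Dᵀ * fromBlocks 0 S 0 W +
      fromBlocks Aᵀ 0 (-Bᵀ) 0 * fromBlocks 0 S 0 W ^ 2 = 0 := by
  rw [eq_neg_iff_add_eq_zero] at hW
  have upper : C + D * S + Cᵀ * W + Aᵀ * (S * W) = 0 :=
    calc _ = (D * S + Sᵀ * A - Sᵀ * B * S + C) + (Cᵀ + Aᵀ * S + Sᵀ * (Dᵀ - Bᵀ * S)) * W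
          - Sᵀ * ((Dᵀ - Bᵀ * S) * W + (A - B * S)) := by noncomm_ring
      _ = 0 := by rw [hS, tNARE_transpose hS, hW]; simp
  have lower : A + -B * S + Dᵀ * W + -Bᵀ * (S * W) = 0 := by
    rw [← hW]; noncomm_ring
  rw [sq]
  simp only [fromBlocks_multiply, fromBlocks_add, Matrix.zero_mul, Matrix.mul_zero, add_zero,
    zero_add, ← add_assoc]
  rw [upper, lower, fromBlocks_zero]

end TNARE

/-- if `S` solves the ⊤-NARE `D S + Sᵀ A − Sᵀ B S + C = 0` and
`Dᵀ − Bᵀ S` is invertible, then with `W = −(Dᵀ − Bᵀ S)⁻¹ (A − B S)` and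
`G = [[0, S], [0, W]]` one has `𝓐₋₁ + 𝓐₀ G + 𝓐₁ G² = 0` and the spectral radius of
`G` equals that of `W`; hence if the spectral radius of `W` is less than one, `G` is
a solution of the quadratic matrix equation with spectral radius less than one. -/
theorem tNARE_solution_gives_quadratic_solution
    (n : ℕ) (A B C D : Matrix (Fin n) (Fin n) ℂ)
    (S : Matrix (Fin n) (Fin n) ℂ)
    (hS : D * S + Sᵀ * A - Sᵀ * B * S + C = 0)
    (hinv : IsUnit (Dᵀ - Bᵀ * S)) :
    ∀ W : Matrix (Fin n) (Fin n) ℂ,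
      W = -(Dᵀ - Bᵀ * S)⁻¹ * (A - B * S) →
      ∀ Am1 A0 A1 G : Matrix (Fin n ⊕ Fin n) (Fin n ⊕ Fin n) ℂ,
        Am1 = Matrix.fromBlocks 0 C 0 A →
        A0 = Matrix.fromBlocks D Cᵀ (-B) Dᵀ →
        A1 = Matrix.fromBlocks Aᵀ 0 (-Bᵀ) 0 →
        G = Matrix.fromBlocks 0 S 0 W →
        Am1 + A0 * G + A1 * G ^ 2 = 0 ∧
        spectralRadius ℂ G = spectralRadius ℂ W ∧
        (spectralRadius ℂ W < 1 →
          Am1 + A0 * G + A1 * G ^ 2 = 0 ∧ spectralRadius ℂ G < 1) := by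
  rintro W hW _ _ _ _ rfl rfl rfl rfl
  have hdet : IsUnit (Dᵀ - Bᵀ * S).det := (Matrix.isUnit_iff_isUnit_det _).mp hinv
  have hW' : (Dᵀ - Bᵀ * S) * W = -(A - B * S) := by
    rw [hW, neg_mul, mul_neg, Matrix.mul_nonsing_inv_cancel_left _ _ hdet]
  have quad := fromBlocks_quadratic_eq_zero_of_tNARE hS hW'
  have radius : spectralRadius ℂ (Matrix.fromBlocks (0 : Matrix (Fin n) (Fin n) ℂ) S 0 W) = spectralRadius ℂ W := by
    rw [Matrix.spectralRadius_fromBlocks_zero₂₁, spectrum.spectralRadius_zero,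
      max_eq_right zero_le]
  exact ⟨quad, radius, fun h => ⟨quad, radius ▸ h⟩⟩
end

section
/- Let A, B, C, D ∈ ℝ^{n×n}, M = [[C, D],[A, −B]], and define 𝓐₋₁ = [[0, C],[0, A]], 𝓐₀ = [[D, Cᵀ],[−B, Dᵀ]], 𝓐₁ = [[Aᵀ, 0],[−Bᵀ, 0]] (2×2 block form with n×n blocks). Assume the pencil φ(z) = M + zMᵀ is non-critical, i.e., det(M + zMᵀ) ≠ 0 for all z ∈ ℂ with |z| = 1. If G ∈ ℂ^{2n×2n} satisfies 𝓐₋₁ + 𝓐₀G + 𝓐₁G² = 0 and has spectral radius less than 1, then, writing G = [[G₁₁, G₁],[G₂₁, G₂]] in n×n blocks, one has G₁₁ = 0 and G₂₁ = 0, the matrix G₁ satisfies the ⊤-NARE DG₁ + G₁ᵀA − G₁ᵀBG₁ + C = 0, the matrix Dᵀ − BᵀG₁ is invertible, and G₂ = −(Dᵀ − BᵀG₁)⁻¹(A − BG₁). -/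
/-!
Dividing the quadratic matrix polynomial by its solvent gives
`𝓐₋₁ + z𝓐₀ + z²𝓐₁ = (𝓐₀ + 𝓐₁G + z𝓐₁)(zI - G)`. Since `𝓠(z) = φ(z)·[[0, I], [zI, 0]]` and
`φ(z) = M + zMᵀ` is ⊤-palindromic, `det 𝓠` is a palindromic polynomial of degree `≤ 4n` with no
zeros on the unit circle, so exactly `2n` of its zeros lie in the open unit disk. These are the
eigenvalues of `G`, so `det (𝓐₀ + 𝓐₁G)`, the value of the other factor at `0`, is nonzero.
Then `(𝓐₀ + 𝓐₁G)G = -𝓐₋₁` forces the first block column of `G` to vanish. The two remaining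
block equations show that the ⊤-NARE residual `R` of `G₁` satisfies `R + RᵀG₂ = 0`, hence
`R = G₂ᵀRG₂`, which forces `R = 0` because `ρ(G₂) < 1`. Once `R = 0`, `𝓐₀ + 𝓐₁G` factors
through `Dᵀ - BᵀG₁`, which is therefore invertible, and the (2,2) block equation gives `G₂`.
-/

open Polynomial Matrix

namespace Polynomial

theorem reflect_prod_X_sub_C {R : Type*} [CommRing R] [Nontrivial R] (s : Multiset R) :
    reflect (Multiset.card s) (s.map fun a => X - C a).prod =
      (s.map fun a => 1 - C a * X).prod := by
  induction s using Multiset.induction_on with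
  | empty => simp [reflect_one]
  | cons a t ih =>
    rw [Multiset.map_cons, Multiset.prod_cons, Multiset.card_cons, add_comm,
      reflect_mul _ _ (natDegree_X_sub_C_le a) (natDegree_multiset_prod_X_sub_C_eq_card t).le, ih,
      reflect_sub, reflect_C, ← pow_one X, reflect_monomial]
    simp [Multiset.map_cons]

theorem roots_prod_one_sub_C_mul_X {K : Type*} [Field K] [DecidableEq K] (s : Multiset K) :
    (s.map fun a => 1 - C a * X).prod.roots = (s.filter (· ≠ 0)).map (·⁻¹) := by
  induction s using Multiset.induction_on with
  | empty => simp
  | cons a t ih =>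
    have hne : ∀ b : K, (1 - C b * X : K[X]) ≠ 0 := fun b h => by
      simpa using congrArg (coeff · 0) h
    rw [Multiset.map_cons, Multiset.prod_cons, roots_mul (mul_ne_zero (hne a)
      (Multiset.prod_ne_zero fun h => by
        obtain ⟨b, -, hb⟩ := Multiset.mem_map.mp h; exact hne b hb)), ih]
    by_cases ha : a = 0
    · simp [ha]
    · have : (1 - C a * X : K[X]) = C (-a) * X - C (-1) := by simp [sub_eq_add_neg, add_comm]
      rw [this, roots_C_mul_X_sub_C _ (neg_ne_zero.mpr ha)]
      simp [ha, inv_neg]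

theorem roots_reflect {K : Type*} [Field K] [IsAlgClosed K] [DecidableEq K] {f : K[X]} {N : ℕ}
    (hf : f ≠ 0) (hN : f.natDegree ≤ N) :
    (reflect N f).roots =
      (f.roots.filter (· ≠ 0)).map (·⁻¹) + Multiset.replicate (N - f.natDegree) 0 := by
  have hcard : Multiset.card f.roots = f.natDegree := IsAlgClosed.card_roots_eq_natDegree
  have hprod := C_leadingCoeff_mul_prod_multiset_X_sub_C hcard
  have hreflect : reflect N f = C f.leadingCoeff *
      ((f.roots.map fun a => 1 - C a * X).prod * X ^ (N - f.natDegree)) := by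
    conv_lhs => rw [← hprod, ← Nat.add_sub_cancel' hN, ← mul_one (Multiset.prod _), ← hcard]
    rw [reflect_C_mul, reflect_mul _ _ (natDegree_multiset_prod_X_sub_C_eq_card _).le
      (natDegree_one.trans_le (Nat.zero_le _)), reflect_prod_X_sub_C, reflect_one, hcard]
  have hne : reflect N f ≠ 0 := by rwa [Ne, reflect_eq_zero_iff]
  rw [hreflect] at hne ⊢
  rw [roots_C_mul _ (leadingCoeff_ne_zero.mpr hf), roots_mul (right_ne_zero_of_mul hne),
    roots_prod_one_sub_C_mul_X, roots_X_pow, Multiset.nsmul_singleton]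

theorem reflect_eq_self_of_eval_eq {K : Type*} [Field K] [Infinite K] {f : K[X]} {N : ℕ}
    (hN : f.natDegree ≤ N) (hf : ∀ z ≠ 0, f.eval z = z ^ N * f.eval z⁻¹) : reflect N f = f := by
  refine eq_of_infinite_eval_eq _ _ ((Set.finite_singleton 0).infinite_compl.mono fun z hz => ?_)
  have hz : z ≠ 0 := hz
  let : Invertible z⁻¹ := invertibleOfNonzero (inv_ne_zero hz)
  have h := eval₂_reflect_mul_pow (RingHom.id K) z⁻¹ N f hN
  rw [invOf_eq_inv, inv_inv, ← eval, ← eval] at h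
  show eval z (reflect N f) = eval z f
  rw [hf z hz, ← h, inv_pow, mul_comm, inv_mul_cancel_right₀ (pow_ne_zero N hz)]

section NormedField

variable {K : Type*} [NormedField K] [IsAlgClosed K]

theorem two_mul_countP_roots_norm_lt_one {f : K[X]} {N : ℕ} (hf : f ≠ 0) (hN : f.natDegree ≤ N)
    (hreflect : reflect N f = f) (hcircle : ∀ z : K, ‖z‖ = 1 → ¬f.IsRoot z) :
    2 * f.roots.countP (‖·‖ < 1) = N := by
  classical
  have hout : f.roots.countP (fun z => ¬‖z‖ < 1) = f.roots.countP (1 < ‖·‖) :=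
    Multiset.countP_congr rfl fun z hz => by
      have hz1 : 1 ≠ ‖z‖ := fun h => hcircle z h.symm (isRoot_of_mem_roots hz)
      rw [not_lt, le_iff_lt_or_eq, or_iff_left hz1]
  have hinv : ((f.roots.filter (· ≠ 0)).map (·⁻¹)).countP (‖·‖ < (1 : ℝ)) =
      f.roots.countP (1 < ‖·‖) := by
    rw [Multiset.countP_map, Multiset.filter_filter, Multiset.countP_eq_card_filter]
    refine congrArg _ (Multiset.filter_congr fun z _ => ?_)
    simp only [norm_inv, inv_lt_one_iff₀, norm_le_zero_iff]
    constructor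
    · rintro ⟨h | h, hz⟩
      exacts [absurd h hz, h]
    · intro h
      exact ⟨Or.inr h, norm_pos_iff.mp (one_pos.trans h)⟩
  have hzero :
      (Multiset.replicate (N - f.natDegree) (0 : K)).countP (‖·‖ < 1) = N - f.natDegree := by
    rw [Multiset.countP_eq_card.mpr fun z hz => by simp [Multiset.eq_of_mem_replicate hz],
      Multiset.card_replicate]
  have hcount := congrArg (Multiset.countP (‖·‖ < 1)) (roots_reflect hf hN)
  rw [hreflect, Multiset.countP_add, hinv, hzero] at hcount
  have hsplit := Multiset.card_eq_countP_add_countP (‖·‖ < 1) f.roots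
  rw [hout, IsAlgClosed.card_roots_eq_natDegree] at hsplit
  omega

theorem not_isRoot_of_reflect_mul_eq_self {f g : K[X]} (hfg : f * g ≠ 0)
    (hdeg : (f * g).natDegree ≤ 2 * g.natDegree)
    (hreflect : reflect (2 * g.natDegree) (f * g) = f * g)
    (hcircle : ∀ z : K, ‖z‖ = 1 → ¬(f * g).IsRoot z) (hg : ∀ z, g.IsRoot z → ‖z‖ < 1)
    {z : K} (hz : ‖z‖ < 1) : ¬f.IsRoot z := by
  have hcount := two_mul_countP_roots_norm_lt_one hfg hdeg hreflect hcircle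
  have hgcount : g.roots.countP (‖·‖ < 1) = g.natDegree := by
    rw [Multiset.countP_eq_card.mpr fun w hw => hg w (isRoot_of_mem_roots hw),
      IsAlgClosed.card_roots_eq_natDegree]
  rw [roots_mul hfg, Multiset.countP_add, hgcount] at hcount
  have hf : f.roots.countP (‖·‖ < 1) = 0 := by omega
  exact fun hroot => Multiset.countP_eq_zero.mp hf z
    ((mem_roots (left_ne_zero_of_mul hfg)).mpr hroot) hz

end NormedField

end Polynomial

theorem eq_zero_of_mul_mul_eq_self {K A : Type*} [Field K] [IsAlgClosed K] [Ring A] [Algebra K A]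
    [FiniteDimensional K A] {P Q R : A} (hR : P * R * Q = R)
    (hspec : ∀ μ ∈ spectrum K P, ∀ ν ∈ spectrum K Q, μ * ν ≠ 1) : R = 0 := by
  by_contra hR0
  set T : Module.End K A := LinearMap.mulLeft K P ∘ₗ LinearMap.mulRight K Q
  have hT : ∀ X, T X = P * X * Q := fun X => (mul_assoc P X Q).symm
  have hmem : ∀ X, X ∈ T.eigenspace 1 ↔ P * X * Q = X := fun X => by
    rw [Module.End.mem_eigenspace_iff, hT, one_smul]
  -- left multiplication by `P` commutes with `T`, so it has an eigenvector inside `ker (T - 1)`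
  have hmaps : ∀ X ∈ T.eigenspace 1, P * X ∈ T.eigenspace 1 := fun X hX => by
    rw [hmem] at hX ⊢
    rw [mul_assoc, hX]
  have : Nontrivial (T.eigenspace 1) :=
    Submodule.nontrivial_iff_ne_bot.mpr ((Submodule.ne_bot_iff _).mpr ⟨R, (hmem R).mpr hR, hR0⟩)
  obtain ⟨μ, hμ⟩ := Module.End.exists_eigenvalue ((LinearMap.mulLeft K P).restrict hmaps)
  obtain ⟨⟨V, hVE⟩, hV⟩ := hμ.exists_hasEigenvector
  have hPV : P * V = μ • V := congrArg Subtype.val hV.apply_eq_smul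
  have hV0 : V ≠ 0 := fun h => hV.2 (Subtype.ext h)
  have hVQ : μ • (V * Q) = V := by rw [← smul_mul_assoc, ← hPV, (hmem V).mp hVE]
  have hμ0 : μ ≠ 0 := by
    rintro rfl
    exact hV0 (by rw [← hVQ, zero_smul])
  have hμP : μ ∈ spectrum K P := fun hunit => hV0 <| hunit.mul_right_eq_zero.mp <| by
    rw [sub_mul, Algebra.algebraMap_eq_smul_one, smul_one_mul, hPV, sub_self]
  have hVQ' : V * Q = μ⁻¹ • V := (eq_inv_smul_iff₀ hμ0).mpr hVQ
  have hμQ : μ⁻¹ ∈ spectrum K Q := fun hunit => hV0 <| hunit.mul_left_eq_zero.mp <| by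
    rw [mul_sub, Algebra.algebraMap_eq_smul_one, mul_smul_one, hVQ', sub_self]
  exact hspec μ hμP μ⁻¹ hμQ (mul_inv_cancel₀ hμ0)

theorem quadratic_eq_mul_sub_of_solvent {R A : Type*} [CommRing R] [Ring A] [Algebra R A]
    {P₀ P₁ P₂ G : A} (hG : P₀ + P₁ * G + P₂ * G ^ 2 = 0) (z : R) :
    P₀ + z • P₁ + z ^ 2 • P₂ = (P₁ + P₂ * G + z • P₂) * (z • 1 - G) := by
  rw [← sub_eq_zero, ← hG]
  simp only [mul_sub, add_mul, smul_mul_assoc, mul_smul_comm, mul_one, pow_two, mul_assoc]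
  module

theorem spectrum.norm_lt_one_of_spectralRadius_lt_one {𝕜 A : Type*} [NormedField 𝕜] [Ring A]
    [Algebra 𝕜 A] {a : A} (ha : spectralRadius 𝕜 a < 1) {μ : 𝕜} (hμ : μ ∈ spectrum 𝕜 a) :
    ‖μ‖ < 1 := by
  have : (‖μ‖₊ : ENNReal) < 1 := (le_iSup₂ (α := ENNReal) μ hμ).trans_lt ha
  exact_mod_cast this

namespace Matrix

theorem toBlocks₁₁_eq_zero_and_toBlocks₂₁_eq_zero_of_mul_eq {l m k p R : Type*} [Fintype l]
    [Fintype m] [DecidableEq l] [DecidableEq m] [CommRing R] {S : Matrix (l ⊕ m) (l ⊕ m) R}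
    {G : Matrix (l ⊕ m) (k ⊕ p) R} {X : Matrix l p R} {Y : Matrix m p R} (hS : IsUnit S.det)
    (h : S * G = fromBlocks 0 X 0 Y) : G.toBlocks₁₁ = 0 ∧ G.toBlocks₂₁ = 0 := by
  have hG : G = S⁻¹ * fromBlocks 0 X 0 Y := by rw [← h, nonsing_inv_mul_cancel_left _ _ hS]
  rw [hG, ← fromBlocks_toBlocks S⁻¹, fromBlocks_multiply]
  simp

variable {m K : Type*} [Fintype m] [DecidableEq m]

theorem eval_det_X_smul_add {R : Type*} [CommRing R] (A B : Matrix m m R) (z : R) :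
    (det ((X : R[X]) • A.map C + B.map C)).eval z = det (z • A + B) := by
  rw [← coe_evalRingHom, RingHom.map_det, RingHom.mapMatrix_apply]
  congr 1
  ext i j
  simp only [map_apply, add_apply, smul_apply, smul_eq_mul, coe_evalRingHom, eval_add, eval_mul,
    eval_X, eval_C]

section Field

variable [Field K]

theorem spectrum_transpose (Y : Matrix m m K) : spectrum K Yᵀ = spectrum K Y := by
  ext μ
  rw [mem_spectrum_iff_isRoot_charpoly, mem_spectrum_iff_isRoot_charpoly, charpoly_transpose]

theorem spectrum_subset_spectrum_fromBlocks_zero₂₁ {n : Type*} [Fintype n] [DecidableEq n]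
    (A : Matrix m m K) (B : Matrix m n K) (D : Matrix n n K) :
    spectrum K D ⊆ spectrum K (fromBlocks A B 0 D) := fun μ hμ => by
  rw [mem_spectrum_iff_isRoot_charpoly] at hμ ⊢
  rw [charpoly_fromBlocks_zero₂₁, IsRoot, eval_mul, hμ.eq_zero, mul_zero]

theorem det_add_smul_transpose_eq_pow_mul (M : Matrix m m K) {z : K} (hz : z ≠ 0) :
    det (M + z • Mᵀ) = z ^ Fintype.card m * det (M + z⁻¹ • Mᵀ) := by
  rw [← det_transpose, transpose_add, transpose_smul, transpose_transpose, ← det_smul, smul_add,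
    smul_smul, mul_inv_cancel₀ hz, one_smul, add_comm]

end Field

section NormedField

variable [NormedField K] [IsAlgClosed K]

theorem det_add_mul_ne_zero_of_solvent {P₀ P₁ P₂ G : Matrix m m K}
    (hG : P₀ + P₁ * G + P₂ * G ^ 2 = 0)
    (hpal : ∀ z ≠ 0, det (P₀ + z • P₁ + z ^ 2 • P₂) =
      z ^ (2 * Fintype.card m) * det (P₀ + z⁻¹ • P₁ + z⁻¹ ^ 2 • P₂))
    (hcircle : ∀ z : K, ‖z‖ = 1 → det (P₀ + z • P₁ + z ^ 2 • P₂) ≠ 0)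
    (hspec : ∀ μ ∈ spectrum K G, ‖μ‖ < 1) : det (P₁ + P₂ * G) ≠ 0 := by
  set ψ : K[X] := det ((X : K[X]) • P₂.map C + (P₁ + P₂ * G).map C)
  have hψ : ∀ z, ψ.eval z = det (z • P₂ + (P₁ + P₂ * G)) := eval_det_X_smul_add _ _
  have hF : ∀ z, (ψ * G.charpoly).eval z = det (P₀ + z • P₁ + z ^ 2 • P₂) := fun z => by
    rw [eval_mul, hψ, eval_charpoly, quadratic_eq_mul_sub_of_solvent hG, det_mul, add_comm (z • P₂),
      scalar_apply, smul_one_eq_diagonal]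
  have hF0 : ψ * G.charpoly ≠ 0 := fun h => hcircle 1 norm_one (by rw [← hF, h, eval_zero])
  have hdeg : (ψ * G.charpoly).natDegree ≤ 2 * G.charpoly.natDegree := by
    have : ψ.natDegree ≤ Fintype.card m := natDegree_det_X_add_C_le P₂ (P₁ + P₂ * G)
    rw [charpoly_natDegree_eq_dim]
    exact natDegree_mul_le.trans (by rw [charpoly_natDegree_eq_dim]; omega)
  have hreflect := reflect_eq_self_of_eval_eq hdeg fun z hz => by
    rw [hF, hF, charpoly_natDegree_eq_dim, hpal z hz]
  have h0 := not_isRoot_of_reflect_mul_eq_self hF0 hdeg hreflect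
    (fun z hz h => hcircle z hz (by rw [← hF]; exact h))
    (fun z hz => hspec z (mem_spectrum_iff_isRoot_charpoly.mpr hz)) (norm_zero.trans_lt one_pos)
  rwa [IsRoot, hψ, zero_smul, zero_add] at h0

theorem eq_zero_of_add_transpose_mul_eq_zero {X Y : Matrix m m K} (h : X + Xᵀ * Y = 0)
    (hY : ∀ μ ∈ spectrum K Y, ‖μ‖ < 1) : X = 0 := by
  have hXT : Xᵀ = -(Yᵀ * X) := by
    simpa [eq_neg_iff_add_eq_zero] using congrArg transpose h
  refine eq_zero_of_mul_mul_eq_self (K := K) (P := Yᵀ) (Q := Y) ?_ fun μ hμ ν hν hμν => ?_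
  · rw [← neg_neg (Yᵀ * X), ← hXT, neg_mul, (eq_neg_iff_add_eq_zero.mpr h).symm]
  · rw [spectrum_transpose] at hμ
    have := mul_lt_one_of_nonneg_of_lt_one_left (norm_nonneg μ) (hY μ hμ) (hY ν hν).le
    rw [← norm_mul, hμν, norm_one] at this
    exact lt_irrefl 1 this

end NormedField

end Matrix

section TNARE

variable {n R : Type*} [Fintype n] [DecidableEq n] [CommRing R]

def tnareResidual (A B C D X : Matrix n n R) : Matrix n n R :=
  D * X + Xᵀ * A - Xᵀ * B * X + C

def quadraticization (A B C D : Matrix n n R) (z : R) : Matrix (n ⊕ n) (n ⊕ n) R :=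
  fromBlocks 0 C 0 A + z • fromBlocks D Cᵀ (-B) Dᵀ + z ^ 2 • fromBlocks Aᵀ 0 (-Bᵀ) 0

theorem pencil_mul_eq_quadraticization (A B C D : Matrix n n R) (z : R) :
    (fromBlocks C D A (-B) + z • (fromBlocks C D A (-B))ᵀ) * fromBlocks 0 1 (z • 1) 0 =
      quadraticization A B C D z := by
  simp only [quadraticization, fromBlocks_transpose, transpose_neg, fromBlocks_smul, fromBlocks_add,
    fromBlocks_multiply, fromBlocks_inj]
  refine ⟨?_, ?_, ?_, ?_⟩ <;>
    simp only [mul_zero, zero_add, add_zero, mul_one, mul_smul_comm, smul_neg, smul_zero] <;>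
    module

theorem det_fromBlocks_zero_one_smul_one_zero (z : R) :
    det (fromBlocks 0 1 (z • 1) 0 : Matrix (n ⊕ n) (n ⊕ n) R) =
      z ^ Fintype.card n * det (fromBlocks 0 1 1 0 : Matrix (n ⊕ n) (n ⊕ n) R) := by
  have : (fromBlocks 0 1 (z • 1) 0 : Matrix (n ⊕ n) (n ⊕ n) R) =
      fromBlocks 0 1 1 0 * fromBlocks (z • 1) 0 0 1 := by
    simp [fromBlocks_multiply]
  rw [this, det_mul, det_fromBlocks_zero₂₁, det_smul, det_one, mul_one, mul_one, mul_comm]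

theorem isUnit_det_fromBlocks_zero_one_one_zero :
    IsUnit (det (fromBlocks 0 1 1 0 : Matrix (n ⊕ n) (n ⊕ n) R)) :=
  IsUnit.of_mul_eq_one (det (fromBlocks 0 1 1 0)) <| by
    rw [← det_mul, fromBlocks_multiply]
    simp

theorem quadraticization_solvent_blocks {A B C D G₁ G₂ : Matrix n n R}
    (hG : fromBlocks 0 C 0 A + fromBlocks D Cᵀ (-B) Dᵀ * fromBlocks 0 G₁ 0 G₂ +
      fromBlocks Aᵀ 0 (-Bᵀ) 0 * fromBlocks 0 G₁ 0 G₂ ^ 2 = 0) :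
    C + D * G₁ + Cᵀ * G₂ + Aᵀ * (G₁ * G₂) = 0 ∧ A - B * G₁ + Dᵀ * G₂ - Bᵀ * (G₁ * G₂) = 0 := by
  rw [pow_two, fromBlocks_multiply, fromBlocks_multiply, fromBlocks_multiply, fromBlocks_add,
    fromBlocks_add, ← fromBlocks_zero, fromBlocks_inj] at hG
  obtain ⟨-, h₁₂, -, h₂₂⟩ := hG
  simp only [zero_mul, add_zero, zero_add, neg_mul] at h₁₂ h₂₂
  exact ⟨by rw [← h₁₂]; abel, by rw [← h₂₂]; abel⟩

theorem tnareResidual_add_transpose_mul_eq_zero {A B C D G₁ G₂ : Matrix n n R}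
    (h₁₂ : C + D * G₁ + Cᵀ * G₂ + Aᵀ * (G₁ * G₂) = 0)
    (h₂₂ : A - B * G₁ + Dᵀ * G₂ - Bᵀ * (G₁ * G₂) = 0) :
    tnareResidual A B C D G₁ + (tnareResidual A B C D G₁)ᵀ * G₂ = 0 := by
  calc
    _ = (C + D * G₁ + Cᵀ * G₂ + Aᵀ * (G₁ * G₂)) +
          G₁ᵀ * (A - B * G₁ + Dᵀ * G₂ - Bᵀ * (G₁ * G₂)) := by
      simp only [tnareResidual, transpose_add, transpose_sub, transpose_mul, transpose_transpose]
      noncomm_ring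
    _ = 0 := by rw [h₁₂, h₂₂, mul_zero, add_zero]

theorem quadraticization_solvent_factor {A B C D G₁ G₂ : Matrix n n R}
    (hR : tnareResidual A B C D G₁ = 0) :
    fromBlocks D Cᵀ (-B) Dᵀ + fromBlocks Aᵀ 0 (-Bᵀ) 0 * fromBlocks 0 G₁ 0 G₂ =
      fromBlocks D (-G₁ᵀ) (-B) 1 * fromBlocks 1 0 0 (Dᵀ - Bᵀ * G₁) := by
  have hRT : Cᵀ + Aᵀ * G₁ = -G₁ᵀ * (Dᵀ - Bᵀ * G₁) := by
    rw [← sub_eq_zero, ← transpose_zero, ← hR]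
    simp only [tnareResidual, transpose_add, transpose_sub, transpose_mul, transpose_transpose]
    noncomm_ring
  simp only [fromBlocks_multiply, fromBlocks_add, fromBlocks_inj]
  refine ⟨?_, ?_, ?_, ?_⟩ <;> simp [hRT, sub_eq_add_neg]

theorem isUnit_det_sub_of_tnareResidual_eq_zero {A B C D G₁ G₂ : Matrix n n R}
    (hR : tnareResidual A B C D G₁ = 0)
    (hS : IsUnit (det (fromBlocks D Cᵀ (-B) Dᵀ + fromBlocks Aᵀ 0 (-Bᵀ) 0 * fromBlocks 0 G₁ 0 G₂))) :
    IsUnit (det (Dᵀ - Bᵀ * G₁)) := by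
  rw [quadraticization_solvent_factor hR, det_mul, det_fromBlocks_zero₂₁, det_one, one_mul] at hS
  exact isUnit_of_mul_isUnit_right hS

theorem eq_neg_inv_mul_of_solvent_block {A B D G₁ G₂ : Matrix n n R}
    (h₂₂ : A - B * G₁ + Dᵀ * G₂ - Bᵀ * (G₁ * G₂) = 0) (hT : IsUnit (det (Dᵀ - Bᵀ * G₁))) :
    G₂ = -(Dᵀ - Bᵀ * G₁)⁻¹ * (A - B * G₁) := by
  have h : (Dᵀ - Bᵀ * G₁) * G₂ = -(A - B * G₁) := by
    rw [eq_neg_iff_add_eq_zero, ← h₂₂]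
    noncomm_ring
  rw [neg_mul, ← mul_neg, ← h, nonsing_inv_mul_cancel_left _ _ hT]

section Field

variable {K : Type*} [Field K]

theorem det_quadraticization_eq_det_pencil_mul (A B C D : Matrix n n K) (z : K) :
    det (quadraticization A B C D z) =
      det (fromBlocks C D A (-B) + z • (fromBlocks C D A (-B))ᵀ) *
        (z ^ Fintype.card n * det (fromBlocks 0 1 1 0 : Matrix (n ⊕ n) (n ⊕ n) K)) := by
  rw [← pencil_mul_eq_quadraticization, det_mul, det_fromBlocks_zero_one_smul_one_zero]

theorem det_quadraticization_eq_pow_mul (A B C D : Matrix n n K) {z : K} (hz : z ≠ 0) :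
    det (quadraticization A B C D z) =
      z ^ (2 * Fintype.card (n ⊕ n)) * det (quadraticization A B C D z⁻¹) := by
  rw [det_quadraticization_eq_det_pencil_mul, det_quadraticization_eq_det_pencil_mul,
    det_add_smul_transpose_eq_pow_mul _ hz, Fintype.card_sum]
  generalize det (fromBlocks C D A (-B) + z⁻¹ • (fromBlocks C D A (-B))ᵀ) = φ
  rw [inv_pow]
  field_simp
  ring

theorem det_quadraticization_ne_zero (A B C D : Matrix n n K) {z : K} (hz : z ≠ 0)
    (hφ : det (fromBlocks C D A (-B) + z • (fromBlocks C D A (-B))ᵀ) ≠ 0) :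
    det (quadraticization A B C D z) ≠ 0 := by
  rw [det_quadraticization_eq_det_pencil_mul]
  exact mul_ne_zero hφ
    (mul_ne_zero (pow_ne_zero _ hz) isUnit_det_fromBlocks_zero_one_one_zero.ne_zero)

end Field

end TNARE

/-- if the pencil `φ(z) = M + z Mᵀ` (with `M = [[C, D], [A, −B]]` real,
viewed over ℂ) is non-critical and `G` solves the quadratic matrix equation
`𝓐₋₁ + 𝓐₀ G + 𝓐₁ G² = 0` with spectral radius less than one, then the (1,1) and (2,1)
blocks of `G` vanish, its (1,2) block `G₁` solves the ⊤-NARE, `Dᵀ − Bᵀ G₁` is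
invertible, and the (2,2) block is `G₂ = −(Dᵀ − Bᵀ G₁)⁻¹ (A − B G₁)`. -/
theorem quadratic_solution_gives_tNARE_solution
    (n : ℕ) (A B C D : Matrix (Fin n) (Fin n) ℝ) :
    ∀ Ac Bc Cc Dc : Matrix (Fin n) (Fin n) ℂ,
      Ac = A.map (Complex.ofReal ·) → Bc = B.map (Complex.ofReal ·) →
      Cc = C.map (Complex.ofReal ·) → Dc = D.map (Complex.ofReal ·) →
      ∀ M Am1 A0 A1 : Matrix (Fin n ⊕ Fin n) (Fin n ⊕ Fin n) ℂ,
        M = Matrix.fromBlocks Cc Dc Ac (-Bc) →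
        Am1 = Matrix.fromBlocks 0 Cc 0 Ac →
        A0 = Matrix.fromBlocks Dc Ccᵀ (-Bc) Dcᵀ →
        A1 = Matrix.fromBlocks Acᵀ 0 (-Bcᵀ) 0 →
        (∀ z : ℂ, ‖z‖ = 1 → (M + z • Mᵀ).det ≠ 0) →
        ∀ G : Matrix (Fin n ⊕ Fin n) (Fin n ⊕ Fin n) ℂ,
          Am1 + A0 * G + A1 * G ^ 2 = 0 →
          spectralRadius ℂ G < 1 →
          G.toBlocks₁₁ = 0 ∧ G.toBlocks₂₁ = 0 ∧
          Dc * G.toBlocks₁₂ + G.toBlocks₁₂ᵀ * Ac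
            - G.toBlocks₁₂ᵀ * Bc * G.toBlocks₁₂ + Cc = 0 ∧
          IsUnit (Dcᵀ - Bcᵀ * G.toBlocks₁₂) ∧
          G.toBlocks₂₂ = -(Dcᵀ - Bcᵀ * G.toBlocks₁₂)⁻¹ * (Ac - Bc * G.toBlocks₁₂) := by
  intro Ac Bc Cc Dc _ _ _ _ M Am1 A0 A1 hM hAm1 hA0 hA1 hφ G hG hρ
  subst hM hAm1 hA0 hA1
  have hspec : ∀ μ ∈ spectrum ℂ G, ‖μ‖ < 1 := fun _ =>
    spectrum.norm_lt_one_of_spectralRadius_lt_one hρ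
  have hS := det_add_mul_ne_zero_of_solvent hG
    (fun _ hz => det_quadraticization_eq_pow_mul _ _ _ _ hz)
    (fun z hz => det_quadraticization_ne_zero _ _ _ _ (norm_ne_zero_iff.mp (hz ▸ one_ne_zero))
      (hφ z hz)) hspec
  have hSG : (fromBlocks Dc Ccᵀ (-Bc) Dcᵀ + fromBlocks Acᵀ 0 (-Bcᵀ) 0 * G) * G =
      fromBlocks 0 (-Cc) 0 (-Ac) := by
    rw [add_mul, mul_assoc, ← pow_two, ← neg_zero, ← fromBlocks_neg, neg_zero]
    exact eq_neg_of_add_eq_zero_right (by rwa [← add_assoc])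
  obtain ⟨h₁₁, h₂₁⟩ :=
    toBlocks₁₁_eq_zero_and_toBlocks₂₁_eq_zero_of_mul_eq (isUnit_iff_ne_zero.mpr hS) hSG
  set G₁ := G.toBlocks₁₂
  set G₂ := G.toBlocks₂₂
  have hGb : G = fromBlocks 0 G₁ 0 G₂ := (fromBlocks_toBlocks G).symm.trans (by rw [h₁₁, h₂₁])
  rw [hGb] at hG hS hspec
  obtain ⟨h₁₂, h₂₂⟩ := quadraticization_solvent_blocks hG
  have hR : tnareResidual Ac Bc Cc Dc G₁ = 0 :=
    eq_zero_of_add_transpose_mul_eq_zero (tnareResidual_add_transpose_mul_eq_zero h₁₂ h₂₂)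
      fun μ hμ => hspec μ (spectrum_subset_spectrum_fromBlocks_zero₂₁ _ _ _ hμ)
  have hT := isUnit_det_sub_of_tnareResidual_eq_zero hR (isUnit_iff_ne_zero.mpr hS)
  exact ⟨h₁₁, h₂₁, hR, (isUnit_iff_isUnit_det _).mpr hT, eq_neg_inv_mul_of_solvent_block h₂₂ hT⟩
end

section
/- Let M ∈ ℂ^{2n×2n} be such that det(M + zMᵀ) ≠ 0 for all z ∈ ℂ with |z| = 1, and define the matrix 𝓘(M) = (1/(2πi)) ∮_{|z|=1} (M + zMᵀ)⁻¹ dz, the contour integral over the unit circle traversed counterclockwise (taken in the Banach algebra of 2n×2n complex matrices). Then the matrix P = 𝓘(M)·Mᵀ is idempotent, P² = P, and has rank n. -/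
/-!
Write `φ z = M + z • Mᵀ` and `Q = ∮_{|z|=1} (φ z)⁻¹ dz`. Since `φ` stays invertible on a closed
annulus `r ≤ |z| ≤ 1`, Cauchy's theorem lets one move one factor of `Q * Mᵀ * Q` to the circle
`|w| = r`. The resolvent identity `(φ z)⁻¹ Mᵀ (φ w)⁻¹ = (w - z)⁻¹ ((φ z)⁻¹ - (φ w)⁻¹)` and Fubini
then leave only the Cauchy kernel to integrate, and `Q * Mᵀ * Q = 2πi Q`: `P` is idempotent, so its
rank is its trace.

No eigenvalue count is needed for the trace. The palindromic symmetry `φ z⁻¹ = z⁻¹ (φ z)ᵀ` gives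
`z tr((φ z)⁻¹ Mᵀ) + z⁻¹ tr((φ z⁻¹)⁻¹ Mᵀ) = 2n`, and since `θ ↦ -θ` maps the circle to itself,
`∮ tr((φ z)⁻¹ Mᵀ) dz` is half of `2πi · 2n`, whence `tr P = n`.
-/

open scoped Matrix

attribute [local instance] Matrix.frobeniusNormedAddCommGroup Matrix.frobeniusNormedSpace
attribute [local instance] Matrix.frobeniusNormedRing Matrix.frobeniusNormedAlgebra

open scoped Real
open Complex Metric Set MeasureTheory

theorem isIdempotentElem_inv_smul_mul {K A : Type*} [Field K] [Ring A] [Algebra K A] {q b : A}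
    {t : K} (ht : t ≠ 0) (h : q * b * q = t • q) : IsIdempotentElem (t⁻¹ • q * b) := by
  have hqb : q * b * (q * b) = t • (q * b) := by rw [← mul_assoc, h, smul_mul_assoc]
  rw [IsIdempotentElem, smul_mul_assoc, mul_smul_comm, smul_mul_assoc, hqb, smul_smul,
    smul_smul, inv_mul_cancel_right₀ ht]

theorem Function.Periodic.intervalIntegral_eq_of_add_comp_neg {E : Type*} [NormedAddCommGroup E]
    [NormedSpace ℝ E] [CompleteSpace E] {k : ℝ → E} {T : ℝ} {c : E} (hk : Function.Periodic k T)
    (hcont : Continuous k) (hsym : ∀ θ, k θ + k (-θ) = c) :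
    ∫ θ in (0 : ℝ)..T, k θ = (T / 2) • c := by
  have hneg : ∫ θ in (0 : ℝ)..T, k (-θ) = ∫ θ in (0 : ℝ)..T, k θ := by
    rw [intervalIntegral.integral_comp_neg, neg_zero]
    simpa using hk.intervalIntegral_add_eq (-T) 0
  have hsum : (∫ θ in (0 : ℝ)..T, k θ) + ∫ θ in (0 : ℝ)..T, k (-θ) = T • c := by
    rw [← intervalIntegral.integral_add (hcont.intervalIntegrable _ _)
      ((by fun_prop : Continuous fun θ => k (-θ)).intervalIntegrable _ _)]
    simp [hsym]
  rw [hneg, ← two_smul ℝ] at hsum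
  rw [div_eq_inv_mul, mul_smul, ← hsum, smul_smul, inv_mul_cancel₀ two_ne_zero, one_smul]

section CircleIntegral

variable {E : Type*} [NormedAddCommGroup E] [NormedSpace ℂ E]

theorem ContinuousLinearMap.circleIntegral_comp_comm [CompleteSpace E] {F : Type*}
    [NormedAddCommGroup F] [NormedSpace ℂ F] [CompleteSpace F] (L : E →L[ℂ] F) {f : ℂ → E}
    {c : ℂ} {R : ℝ} (hf : CircleIntegrable f c R) :
    ∮ z in C(c, R), L (f z) = L (∮ z in C(c, R), f z) := by
  simp only [circleIntegral, ← L.map_smul]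
  exact L.intervalIntegral_comp_comm hf.out

theorem circleIntegral_comm {c₁ c₂ : ℂ} {R₁ R₂ : ℝ} {F : ℂ → ℂ → E}
    (hF : ContinuousOn (Function.uncurry F) (sphere c₁ |R₁| ×ˢ sphere c₂ |R₂|)) :
    ∮ z in C(c₁, R₁), ∮ w in C(c₂, R₂), F z w = ∮ w in C(c₂, R₂), ∮ z in C(c₁, R₁), F z w := by
  have hcont : Continuous fun p : ℝ × ℝ => deriv (circleMap c₁ R₁) p.1 •
      deriv (circleMap c₂ R₂) p.2 • F (circleMap c₁ R₁ p.1) (circleMap c₂ R₂ p.2) := by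
    simp only [deriv_circleMap]
    refine (((continuous_circleMap _ _).comp continuous_fst).mul continuous_const).smul
      ((((continuous_circleMap _ _).comp continuous_snd).mul continuous_const).smul ?_)
    exact hF.comp_continuous ((continuous_circleMap _ _).prodMap (continuous_circleMap _ _))
      fun p => ⟨circleMap_mem_sphere' _ _ _, circleMap_mem_sphere' _ _ _⟩
  simp only [circleIntegral, ← intervalIntegral.integral_smul]
  rw [intervalIntegral_intervalIntegral_swap]
  · simp only [smul_comm (deriv (circleMap c₁ R₁) _)]
  · exact (hcont.continuousOn.integrableOn_compact (isCompact_uIcc.prod isCompact_uIcc)).mono_set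
      (prod_mono uIoc_subset_uIcc uIoc_subset_uIcc)

theorem circleIntegral_sub_inv_eq_zero_of_lt_dist {c w : ℂ} {R : ℝ} (hR : 0 ≤ R)
    (hw : R < dist w c) : ∮ z in C(c, R), (z - w)⁻¹ = 0 := by
  refine DiffContOnCl.circleIntegral_eq_zero hR (DifferentiableOn.diffContOnCl ?_)
  intro z hz
  have hzw : z ≠ w := fun h => by
    have hz' := closure_ball_subset_closedBall hz
    rw [h, mem_closedBall] at hz'
    linarith
  exact ((differentiableAt_id.sub_const w).inv (sub_ne_zero.2 hzw)).differentiableWithinAt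

theorem circleIntegral_eq_of_smul_add_inv_smul [CompleteSpace E] {f : ℂ → E} {c : E}
    (hf : ContinuousOn f (sphere 0 1))
    (hsym : ∀ z ∈ sphere (0 : ℂ) 1, z • f z + z⁻¹ • f z⁻¹ = c) :
    ∮ z in C(0, 1), f z = (π * I) • c := by
  have hinv : ∀ θ : ℝ, circleMap 0 1 (-θ) = (circleMap 0 1 θ)⁻¹ := fun θ => by
    simp [circleMap, Complex.exp_neg]
  have hcont : Continuous fun θ => deriv (circleMap 0 1) θ • f (circleMap 0 1 θ) := by
    simp only [deriv_circleMap]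
    exact ((continuous_circleMap 0 1).mul continuous_const).smul
      (hf.comp_continuous (continuous_circleMap 0 1) fun θ => by simp)
  have hper : Function.Periodic (fun θ => deriv (circleMap 0 1) θ • f (circleMap 0 1 θ))
      (2 * π) := fun θ => by simp only [deriv_circleMap, periodic_circleMap 0 1 θ]
  rw [circleIntegral, hper.intervalIntegral_eq_of_add_comp_neg hcont (c := I • c)]
  · rw [mul_div_cancel_left₀ π two_ne_zero, mul_smul, Complex.coe_smul]
  · intro θ
    simp only [deriv_circleMap, hinv]
    rw [mul_comm _ I, mul_comm _ I, mul_smul, mul_smul, ← smul_add, hsym _ (by simp)]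

theorem sub_ne_zero_of_mem_sphere_of_ne {c z w : ℂ} {r R : ℝ} (hz : z ∈ sphere c R)
    (hw : w ∈ sphere c r) (hrR : r ≠ R) : w - z ≠ 0 := by
  rintro hwz
  rw [sub_eq_zero.1 hwz, mem_sphere] at hw
  exact hrR (hw.symm.trans (mem_sphere.1 hz))

theorem circleIntegral_circleIntegral_sub_inv_smul_sub [CompleteSpace E] {c : ℂ} {r R : ℝ}
    (hr : 0 ≤ r) (hrR : r < R) (f : ℂ → E) {g : ℂ → E} (hg : ContinuousOn g (sphere c r)) :
    ∮ z in C(c, R), ∮ w in C(c, r), (w - z)⁻¹ • (f z - g w) =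
      (2 * π * I) • ∮ w in C(c, r), g w := by
  have hR : 0 ≤ R := hr.trans hrR.le
  have hkernel : ContinuousOn (fun p : ℂ × ℂ => (p.2 - p.1)⁻¹) (sphere c R ×ˢ sphere c r) :=
    (continuous_snd.sub continuous_fst).continuousOn.inv₀ fun p hp =>
      sub_ne_zero_of_mem_sphere_of_ne hp.1 hp.2 hrR.ne
  have houter : EqOn (fun z => ∮ w in C(c, r), (w - z)⁻¹ • (f z - g w))
      (fun z => ∮ w in C(c, r), (w - z)⁻¹ • -g w) (sphere c R) := fun z hz => by
    have hkz : ContinuousOn (fun w => (w - z)⁻¹) (sphere c r) :=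
      (continuous_id.sub continuous_const).continuousOn.inv₀ fun w hw =>
        sub_ne_zero_of_mem_sphere_of_ne hz hw hrR.ne
    have h1 : CircleIntegrable (fun w => (w - z)⁻¹ • f z) c r :=
      (hkz.smul continuousOn_const).circleIntegrable hr
    have h2 : CircleIntegrable (fun w => (w - z)⁻¹ • -g w) c r :=
      (hkz.smul hg.neg).circleIntegrable hr
    simp only [sub_eq_add_neg (f z), smul_add]
    rw [circleIntegral.integral_add h1 h2, circleIntegral.integral_smul_const,
      circleIntegral_sub_inv_eq_zero_of_lt_dist hr
        (by simpa [dist_comm] using hrR.trans_eq hz.symm),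
      zero_smul, zero_add]
  have hinner : EqOn (fun w => ∮ z in C(c, R), (w - z)⁻¹ • -g w)
      (fun w => (2 * π * I) • g w) (sphere c r) := fun w hw => by
    have hflip : (fun z => (w - z)⁻¹ • -g w) = fun z => (z - w)⁻¹ • g w :=
      funext fun z => by rw [← neg_sub z w, inv_neg, neg_smul_neg]
    dsimp only
    rw [hflip, circleIntegral.integral_smul_const, circleIntegral.integral_sub_inv_of_mem_ball
      (mem_ball.2 (hw.trans_lt hrR))]
  rw [circleIntegral.integral_congr hR houter, circleIntegral_comm,
    circleIntegral.integral_congr hr hinner, circleIntegral.integral_smul]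
  rw [abs_of_nonneg hR, abs_of_nonneg hr]
  exact (hkernel.smul (hg.comp continuousOn_snd fun p hp => hp.2).neg)

theorem circleIntegral_mul_mul_circleIntegral_of_resolvent {𝔸 : Type*} [NormedRing 𝔸]
    [NormedAlgebra ℂ 𝔸] [CompleteSpace 𝔸] {c : ℂ} {r R : ℝ} (hr : 0 ≤ r) (hrR : r < R)
    {g : ℂ → 𝔸} {b : 𝔸} (hgR : ContinuousOn g (sphere c R)) (hgr : ContinuousOn g (sphere c r))
    (hres : ∀ z ∈ sphere c R, ∀ w ∈ sphere c r, g z * b * g w = (w - z)⁻¹ • (g z - g w)) :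
    (∮ z in C(c, R), g z) * b * ∮ w in C(c, r), g w = (2 * π * I) • ∮ w in C(c, r), g w := by
  rw [← circleIntegral_circleIntegral_sub_inv_smul_sub hr hrR g hgr]
  have hinner : EqOn (fun z => g z * b * ∮ w in C(c, r), g w)
      (fun z => ∮ w in C(c, r), (w - z)⁻¹ • (g z - g w)) (sphere c R) := fun z hz => by
    dsimp only
    rw [← ContinuousLinearMap.mul_apply' ℂ, ← ContinuousLinearMap.circleIntegral_comp_comm _
      (hgr.circleIntegrable hr)]
    exact circleIntegral.integral_congr hr fun w hw => hres z hz w hw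
  rw [← circleIntegral.integral_congr (hr.trans hrR.le) hinner]
  simp only [mul_assoc]
  exact ((ContinuousLinearMap.mul ℂ 𝔸).flip _).circleIntegral_comp_comm
    (hgR.circleIntegrable (hr.trans hrR.le)) |>.symm

end CircleIntegral

theorem exists_closedBall_diff_ball_subset_of_sphere_subset {E : Type*} [NormedAddCommGroup E]
    [NormedSpace ℝ E] [ProperSpace E] {U : Set E} (hU : IsOpen U) {R : ℝ} (hR : 0 < R)
    (hsub : sphere (0 : E) R ⊆ U) : ∃ r, 0 < r ∧ r < R ∧ closedBall 0 R \ ball 0 r ⊆ U := by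
  obtain ⟨δ, hδ, hthick⟩ := (isCompact_sphere (0 : E) R).exists_thickening_subset_open hU hsub
  refine ⟨max (R / 2) (R - δ / 2), by positivity, max_lt (by linarith) (by linarith), ?_⟩
  rintro z ⟨hzR, hzr⟩
  rw [mem_closedBall_zero_iff] at hzR
  rw [mem_ball_zero_iff, not_lt, max_le_iff] at hzr
  have hz : 0 < ‖z‖ := by linarith
  refine hthick (mem_thickening_iff.2 ⟨(R / ‖z‖) • z, ?_, ?_⟩)
  · rw [mem_sphere_zero_iff_norm, norm_smul, Real.norm_of_nonneg (by positivity),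
      div_mul_cancel₀ _ hz.ne']
  · have : z - (R / ‖z‖) • z = (1 - R / ‖z‖) • z := by rw [sub_smul, one_smul]
    rw [dist_eq_norm, this, norm_smul, Real.norm_of_nonpos, neg_sub, sub_mul,
      div_mul_cancel₀ _ hz.ne', one_mul]
    · linarith
    · rw [sub_nonpos, le_div_iff₀ hz, one_mul]; exact hzR

namespace Matrix

variable {ι : Type*} [Fintype ι] [DecidableEq ι]

theorem rank_eq_trace_of_isIdempotentElem {K : Type*} [Field K] {P : Matrix ι ι K}
    (hP : IsIdempotentElem P) : (P.rank : K) = P.trace := by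
  have hlin : IsIdempotentElem P.mulVecLin := by
    rw [IsIdempotentElem, Module.End.mul_eq_comp, ← mulVecLin_mul, hP.eq]
  rw [rank, ← ((LinearMap.isProj_range_iff_isIdempotentElem _).2 hlin).trace, ← toLin'_apply',
    trace_toLin'_eq]

theorem inv_add_smul_mul_mul_inv_add_smul {K : Type*} [Field K] {A B : Matrix ι ι K} {z w : K}
    (hz : IsUnit (A + z • B)) (hw : IsUnit (A + w • B)) (hzw : z ≠ w) :
    (A + z • B)⁻¹ * B * (A + w • B)⁻¹ = (w - z)⁻¹ • ((A + z • B)⁻¹ - (A + w • B)⁻¹) := by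
  rw [inv_sub_inv (iff_of_true hz hw), add_sub_add_left_eq_sub, ← sub_smul, Matrix.mul_smul,
    Matrix.smul_mul, smul_smul, inv_mul_cancel₀ (sub_ne_zero.2 hzw.symm), one_smul]

theorem inv_add_inv_smul_transpose {K : Type*} [Field K] (M : Matrix ι ι K) {z : K} (hz : z ≠ 0)
    (hM : IsUnit (M + z • Mᵀ)) : (M + z⁻¹ • Mᵀ)⁻¹ = z • (M + z • Mᵀ)⁻¹ᵀ := by
  have hrefl : M + z⁻¹ • Mᵀ = z⁻¹ • (M + z • Mᵀ)ᵀ := by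
    rw [transpose_add, transpose_smul, transpose_transpose, smul_add, smul_smul,
      inv_mul_cancel₀ hz, one_smul, add_comm]
  rw [hrefl]
  refine inv_eq_left_inv ?_
  rw [Matrix.smul_mul, Matrix.mul_smul, smul_smul, mul_inv_cancel₀ hz, one_smul, ← transpose_mul,
    mul_nonsing_inv _ ((isUnit_iff_isUnit_det _).1 hM), transpose_one]

theorem smul_trace_inv_mul_transpose_add_inv_smul_eq_card {K : Type*} [Field K]
    (M : Matrix ι ι K) {z : K} (hz : z ≠ 0) (hM : IsUnit (M + z • Mᵀ)) :
    z • trace ((M + z • Mᵀ)⁻¹ * Mᵀ) + z⁻¹ • trace ((M + z⁻¹ • Mᵀ)⁻¹ * Mᵀ) = Fintype.card ι := by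
  calc z • trace ((M + z • Mᵀ)⁻¹ * Mᵀ) + z⁻¹ • trace ((M + z⁻¹ • Mᵀ)⁻¹ * Mᵀ)
      = trace ((M + z • Mᵀ)⁻¹ * (M + z • Mᵀ)) := by
        rw [inv_add_inv_smul_transpose M hz hM, smul_mul, trace_smul, smul_smul,
          inv_mul_cancel₀ hz, one_smul, ← transpose_mul, trace_transpose, trace_mul_comm M,
          mul_add, trace_add, Matrix.mul_smul, trace_smul, add_comm]
    _ = Fintype.card ι := by
        rw [nonsing_inv_mul _ ((isUnit_iff_isUnit_det _).1 hM), trace_one]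

theorem differentiableAt_inv_add_smul {A B : Matrix ι ι ℂ} {z : ℂ} (hz : IsUnit (A + z • B)) :
    DifferentiableAt ℂ (fun w : ℂ => (A + w • B)⁻¹) z := by
  simp only [nonsing_inv_eq_ringInverse]
  exact ((differentiableAt_id.smul_const B).const_add A).inverse hz

theorem continuousOn_inv_add_smul {A B : Matrix ι ι ℂ} {s : Set ℂ}
    (h : ∀ z ∈ s, IsUnit (A + z • B)) : ContinuousOn (fun w : ℂ => (A + w • B)⁻¹) s :=
  fun z hz => (differentiableAt_inv_add_smul (h z hz)).continuousAt.continuousWithinAt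

theorem circleIntegral_inv_add_smul_mul_mul_self {A B : Matrix ι ι ℂ} {R : ℝ} (hR : 0 < R)
    (h : ∀ z ∈ sphere (0 : ℂ) R, IsUnit (A + z • B)) :
    (∮ z in C(0, R), (A + z • B)⁻¹) * B * (∮ z in C(0, R), (A + z • B)⁻¹) =
      (2 * π * I) • ∮ z in C(0, R), (A + z • B)⁻¹ := by
  have hU : IsOpen {z : ℂ | IsUnit (A + z • B)} :=
    Units.isOpen.preimage (continuous_const.add (continuous_id.smul continuous_const))
  obtain ⟨r, hr, hrR, hann⟩ := exists_closedBall_diff_ball_subset_of_sphere_subset hU hR h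
  have hshrink : ∮ z in C(0, R), (A + z • B)⁻¹ = ∮ z in C(0, r), (A + z • B)⁻¹ :=
    Complex.circleIntegral_eq_of_differentiable_on_annulus_off_countable hr hrR.le
      countable_empty (continuousOn_inv_add_smul hann) fun z hz =>
        differentiableAt_inv_add_smul (hann (sdiff_subset_sdiff ball_subset_closedBall
          ball_subset_closedBall hz.1))
  have hr_unit : ∀ w ∈ sphere (0 : ℂ) r, IsUnit (A + w • B) := fun w hw =>
    hann ⟨closedBall_subset_closedBall hrR.le (sphere_subset_closedBall hw),
      fun hb => (mem_ball.1 hb).ne (mem_sphere.1 hw)⟩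
  calc _ = (∮ z in C(0, R), (A + z • B)⁻¹) * B * ∮ z in C(0, r), (A + z • B)⁻¹ := by
        rw [← hshrink]
    _ = (2 * π * I) • ∮ z in C(0, r), (A + z • B)⁻¹ :=
        circleIntegral_mul_mul_circleIntegral_of_resolvent hr.le hrR
          (continuousOn_inv_add_smul h) (continuousOn_inv_add_smul hr_unit) fun z hz w hw =>
            inv_add_smul_mul_mul_inv_add_smul (h z hz) (hr_unit w hw)
              (sub_ne_zero.1 (sub_ne_zero_of_mem_sphere_of_ne hz hw hrR.ne)).symm
    _ = _ := by rw [hshrink]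

theorem trace_circleIntegral_inv_add_smul_transpose_mul (M : Matrix ι ι ℂ)
    (h : ∀ z ∈ sphere (0 : ℂ) 1, IsUnit (M + z • Mᵀ)) :
    trace ((∮ z in C(0, 1), (M + z • Mᵀ)⁻¹) * Mᵀ) = π * I * Fintype.card ι := by
  have hcont := continuousOn_inv_add_smul h
  let L : Matrix ι ι ℂ →L[ℂ] ℂ := (LinearMap.toContinuousLinearMap (traceLinearMap ι ℂ ℂ)).comp
    ((ContinuousLinearMap.mul ℂ _).flip Mᵀ)
  have hcomm : trace ((∮ z in C(0, 1), (M + z • Mᵀ)⁻¹) * Mᵀ) =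
      ∮ z in C(0, 1), trace ((M + z • Mᵀ)⁻¹ * Mᵀ) :=
    (L.circleIntegral_comp_comm (hcont.circleIntegrable zero_le_one)).symm
  have htrace : ContinuousOn (fun z : ℂ => trace ((M + z • Mᵀ)⁻¹ * Mᵀ)) (sphere 0 1) :=
    continuous_id.matrix_trace.comp_continuousOn (hcont.fun_mul continuousOn_const)
  rw [hcomm, circleIntegral_eq_of_smul_add_inv_smul htrace fun z hz =>
    smul_trace_inv_mul_transpose_add_inv_smul_eq_card M (ne_of_mem_sphere hz one_ne_zero) (h z hz),
    smul_eq_mul]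

end Matrix

/-- for a non-critical ⊤-palindromic pencil `φ(z) = M + z Mᵀ`, the matrix
`P = 𝓘(M) Mᵀ`, where `𝓘(M) = (2πi)⁻¹ ∮_{|z|=1} φ(z)⁻¹ dz`, is an idempotent of rank n
(the orthogonal projector onto the stable deflating subspace). -/
theorem integral_representation_projector
    (n : ℕ) (M : Matrix (Fin (2 * n)) (Fin (2 * n)) ℂ)
    (h : ∀ z : ℂ, ‖z‖ = 1 → (M + z • Mᵀ).det ≠ 0) :
    ∀ P : Matrix (Fin (2 * n)) (Fin (2 * n)) ℂ,
      P = ((2 * Real.pi * Complex.I : ℂ)⁻¹ •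
            (∮ z in C(0, 1), (M + z • Mᵀ)⁻¹)) * Mᵀ →
      P * P = P ∧ P.rank = n := by
  intro P hP
  have hunit : ∀ z ∈ sphere (0 : ℂ) 1, IsUnit (M + z • Mᵀ) := fun z hz =>
    (Matrix.isUnit_iff_isUnit_det _).2 (isUnit_iff_ne_zero.2 (h z (mem_sphere_zero_iff_norm.1 hz)))
  have hidem : IsIdempotentElem P := hP ▸ isIdempotentElem_inv_smul_mul two_pi_I_ne_zero
    (Matrix.circleIntegral_inv_add_smul_mul_mul_self one_pos hunit)
  have htrace : P.trace = n := by
    rw [hP, Matrix.smul_mul, Matrix.trace_smul,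
      Matrix.trace_circleIntegral_inv_add_smul_transpose_mul M hunit, Fintype.card_fin,
      smul_eq_mul]
    push_cast
    field_simp
  exact ⟨hidem, by exact_mod_cast (Matrix.rank_eq_trace_of_isIdempotentElem hidem).trans htrace⟩
end

section
/- Let M ∈ ℂ^{2n×2n} be invertible, let k ≥ 1, set N = 2^k and ζ = exp(2πi/N), and suppose M + ζʲMᵀ is invertible for every j = 1, …, N. Then the matrix I − (−M⁻ᵀM)^N is invertible and (1/N)·∑_{j=1}^{N} ζʲ (M + ζʲMᵀ)⁻¹ · Mᵀ = (I − (−M⁻ᵀM)^N)⁻¹, where M⁻ᵀ = (Mᵀ)⁻¹. -/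
open scoped Matrix

lemma sum_Icc_one' {α : Type*} [AddCommMonoid α] (N : ℕ) (f : ℕ → α) :
    ∑ j ∈ Finset.Icc 1 N, f j = ∑ i ∈ Finset.range N, f (i + 1) := by
  rw [← Finset.Ico_add_one_right_eq_Icc, Finset.sum_Ico_eq_sum_range]
  simp [add_comm]

/-- closed form for the trapezoidal-rule approximation of the contour
integral.  If `M` is invertible, `N = 2^k`, `ζ = exp(2πi/N)`, and `M + ζʲ Mᵀ` is
invertible for `j = 1, …, N`, then `I − (−M⁻ᵀ M)^N` is invertible and
`(1/N) ∑_{j=1}^{N} ζʲ (M + ζʲ Mᵀ)⁻¹ Mᵀ = (I − (−M⁻ᵀ M)^N)⁻¹`. -/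
theorem trapezoidal_rule_closed_form
    (n k : ℕ) (hk : 1 ≤ k)
    (M : Matrix (Fin (2 * n)) (Fin (2 * n)) ℂ) (hM : IsUnit M.det)
    (ζ : ℂ) (hζ : ζ = Complex.exp (2 * Real.pi * Complex.I / (2 ^ k : ℕ)))
    (hj : ∀ j ∈ Finset.Icc 1 (2 ^ k), IsUnit (M + ζ ^ j • Mᵀ).det) :
    IsUnit (1 - (-(Mᵀ⁻¹ * M)) ^ (2 ^ k) : Matrix (Fin (2 * n)) (Fin (2 * n)) ℂ).det ∧
    (((2 ^ k : ℕ) : ℂ)⁻¹ •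
        ∑ j ∈ Finset.Icc 1 (2 ^ k), ζ ^ j • (M + ζ ^ j • Mᵀ)⁻¹) * Mᵀ
      = (1 - (-(Mᵀ⁻¹ * M)) ^ (2 ^ k))⁻¹ := by
  set N := 2 ^ k with hN
  have hN0 : (N : ℕ) ≠ 0 := by positivity
  have hprim : IsPrimitiveRoot ζ N := hζ ▸ Complex.isPrimitiveRoot_exp N hN0
  have hζN : ζ ^ N = 1 := hprim.pow_eq_one
  set A : Matrix (Fin (2 * n)) (Fin (2 * n)) ℂ := -(Mᵀ⁻¹ * M) with hA
  have hMT : IsUnit (Mᵀ).det := by rwa [Matrix.det_transpose]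
  set B : ℕ → Matrix (Fin (2 * n)) (Fin (2 * n)) ℂ := fun j => ζ ^ j • 1 - A with hB
  -- factorization
  have hfac : ∀ j, M + ζ ^ j • Mᵀ = Mᵀ * B j := by
    intro j
    rw [hB, hA]
    rw [mul_sub, mul_neg, ← Matrix.mul_assoc, Matrix.mul_nonsing_inv _ hMT,
      Matrix.one_mul, sub_neg_eq_add, Matrix.mul_smul, Matrix.mul_one, add_comm]
  have hBunit : ∀ j ∈ Finset.Icc 1 N, IsUnit (B j).det := by
    intro j hjm
    have := hj j hjm
    rw [hfac j, Matrix.det_mul] at this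
    exact (isUnit_of_mul_isUnit_right this)
  -- (M + ζ^j Mᵀ)⁻¹ * Mᵀ = (B j)⁻¹
  have hinv : ∀ j ∈ Finset.Icc 1 N, (M + ζ ^ j • Mᵀ)⁻¹ * Mᵀ = (B j)⁻¹ := by
    intro j hjm
    rw [hfac j, Matrix.mul_inv_rev, Matrix.mul_assoc,
      Matrix.nonsing_inv_mul _ hMT, Matrix.mul_one]
  -- geometric sum companion
  set C : ℕ → Matrix (Fin (2 * n)) (Fin (2 * n)) ℂ :=
    fun j => ∑ i ∈ Finset.range N, (ζ ^ j) ^ i • A ^ (N - 1 - i) with hC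
  have hBC : ∀ j ∈ Finset.Icc 1 N, B j * C j = 1 - A ^ N := by
    intro j hjm
    have hcomm : Commute (ζ ^ j • (1 : Matrix (Fin (2 * n)) (Fin (2 * n)) ℂ)) A :=
      ((Commute.one_left A).smul_left _)
    have := hcomm.mul_geom_sum₂ N
    rw [smul_pow, one_pow, ← pow_mul, mul_comm j N, pow_mul, hζN, one_pow, one_smul] at this
    rw [hB, hC]
    rw [← this]
    congr 1
    apply Finset.sum_congr rfl
    intro i _
    rw [smul_pow, one_pow, smul_mul_assoc, one_mul]
  -- key sum identity
  have hsumC : ∑ j ∈ Finset.Icc 1 N, ζ ^ j • C j = (N : ℂ) • 1 := by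
    have step : ∀ j, ζ ^ j • C j
        = ∑ i ∈ Finset.range N, (ζ ^ (i + 1)) ^ j • A ^ (N - 1 - i) := by
      intro j
      rw [hC, Finset.smul_sum]
      apply Finset.sum_congr rfl
      intro i _
      rw [smul_smul, ← pow_mul, ← pow_add, ← pow_mul]
      congr 2
      ring
    simp_rw [step]
    rw [Finset.sum_comm]
    have inner : ∀ i ∈ Finset.range N,
        (∑ j ∈ Finset.Icc 1 N, (ζ ^ (i + 1)) ^ j) = if i = N - 1 then (N : ℂ) else 0 := by
      intro i hi
      rw [Finset.mem_range] at hi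
      by_cases hiN : i = N - 1
      · subst hiN
        have : ζ ^ (N - 1 + 1) = 1 := by
          rw [Nat.sub_add_cancel (Nat.one_le_iff_ne_zero.mpr hN0), hζN]
        simp [this]
      · simp only [if_neg hiN]
        have hne1 : ζ ^ (i + 1) ≠ 1 := by
          intro h
          rw [hprim.pow_eq_one_iff_dvd] at h
          have := Nat.le_of_dvd (by omega) h
          omega
        have hw : (ζ ^ (i + 1)) ^ N = 1 := by
          rw [← pow_mul, mul_comm, pow_mul, hζN, one_pow]
        rw [sum_Icc_one']
        have : ∀ t, (ζ ^ (i + 1)) ^ (t + 1) = (ζ ^ (i + 1)) ^ t * ζ ^ (i + 1) := by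
          intro t; rw [pow_succ]
        simp_rw [this]
        rw [← Finset.sum_mul, geom_sum_eq hne1, hw, sub_self, zero_div, zero_mul]
    calc ∑ i ∈ Finset.range N, ∑ j ∈ Finset.Icc 1 N, (ζ ^ (i + 1)) ^ j • A ^ (N - 1 - i)
        = ∑ i ∈ Finset.range N, (if i = N - 1 then (N : ℂ) else 0) • A ^ (N - 1 - i) := by
          apply Finset.sum_congr rfl
          intro i hi
          rw [← Finset.sum_smul, inner i hi]
      _ = (N : ℂ) • 1 := by
          simp_rw [ite_smul, zero_smul]
          rw [Finset.sum_ite_eq' (Finset.range N) (N - 1) (fun i => (N : ℂ) • A ^ (N - 1 - i))]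
          simp [Nat.sub_one_lt hN0, Nat.sub_self]
  -- left inverse identity
  have hone : ((((N : ℕ) : ℂ))⁻¹ •
        ∑ j ∈ Finset.Icc 1 N, ζ ^ j • (M + ζ ^ j • Mᵀ)⁻¹) * Mᵀ * (1 - A ^ N) = 1 := by
    have h1 : ((((N : ℕ) : ℂ))⁻¹ •
        ∑ j ∈ Finset.Icc 1 N, ζ ^ j • (M + ζ ^ j • Mᵀ)⁻¹) * Mᵀ
        = ((N : ℂ))⁻¹ • ∑ j ∈ Finset.Icc 1 N, ζ ^ j • (B j)⁻¹ := by
      rw [Matrix.smul_mul, Finset.sum_mul]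
      congr 1
      apply Finset.sum_congr rfl
      intro j hjm
      rw [smul_mul_assoc, hinv j hjm]
    rw [h1, Matrix.smul_mul, Finset.sum_mul]
    have h2 : ∀ j ∈ Finset.Icc 1 N, (ζ ^ j • (B j)⁻¹) * (1 - A ^ N) = ζ ^ j • C j := by
      intro j hjm
      rw [smul_mul_assoc, ← hBC j hjm, ← Matrix.mul_assoc,
        Matrix.nonsing_inv_mul _ (hBunit j hjm), Matrix.one_mul]
    rw [Finset.sum_congr rfl h2, hsumC, smul_smul,
      inv_mul_cancel₀ (Nat.cast_ne_zero.mpr hN0), one_smul]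
  have hdet : IsUnit (1 - A ^ N : Matrix (Fin (2 * n)) (Fin (2 * n)) ℂ).det := by
    have := congrArg Matrix.det hone
    rw [Matrix.det_mul, Matrix.det_one] at this
    exact isUnit_of_mul_isUnit_right (this ▸ isUnit_one)
  refine ⟨hdet, ?_⟩
  exact (Matrix.inv_eq_left_inv hone).symm
end
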